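/- arXiv:1501.01731 — 7 statements merged into one kernel-verified Lean document; each statement's English description precedes it below -/
import Mathlib

section
/- Let p > 1. Suppose z : [0,1] → ℝ is twice continuously differentiable and satisfies z''(x) + z(x)|z(x)|^{p-1} = 0 for all x ∈ [0,1], z(0) = z(1) = 0, z(x) > 0 for all x ∈ (0,1), z(x) = z(1-x) for all x ∈ [0,1], and that z is the unique nonnegative nontrivial solution, i.e. every twice continuously differentiable w : [0,1] → ℝ with w'' + w|w|^{p-1} = 0 on [0,1], w(0) = w(1) = 0, w ≥ 0 and w not identically zero equals z. Then a twice continuously differentiable function w : [0,1] → ℝ satisfies w''(x) + w(x)|w(x)|^{p-1} = 0 for all x ∈ [0,1] together with w(0) = w(1) = 0 if and only if there exists n ∈ ℤ such that w = z^{(n)}. -/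
open Set

/-- The rescaled copy `z⁽ⁿ⁾` of `z` for `n : ℕ`:
`z⁽ⁿ⁾(x) = ± n^(2/(p-1)) z(nx - ⌊nx⌋)`, the sign depending on the parity of `⌊nx⌋`. -/
noncomputable def zNat (p : ℝ) (z : ℝ → ℝ) (n : ℕ) (x : ℝ) : ℝ :=
  if Even ⌊(n : ℝ) * x⌋ then (n : ℝ) ^ (2 / (p - 1)) * z (Int.fract ((n : ℝ) * x))
  else -((n : ℝ) ^ (2 / (p - 1)) * z (Int.fract ((n : ℝ) * x)))

/-- The family `z⁽ⁿ⁾` for `n : ℤ`, with `z⁽⁻ⁿ⁾ := -z⁽ⁿ⁾` and `z⁽⁰⁾ := 0`. -/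
noncomputable def zInt (p : ℝ) (z : ℝ → ℝ) (n : ℤ) (x : ℝ) : ℝ :=
  if 0 ≤ n then zNat p z n.toNat x else -(zNat p z (-n).toNat x)

open Filter Topology

/-!
Multiplying the equation by `w'` shows that the energy `w'^2/2 + |w|^(p+1)/(p+1)` is conserved,
so a solution with `w(0) = w'(0) = 0` vanishes, and otherwise the zeros of `w` are simple.
Between two consecutive zeros `a < b` the solution has one sign `τ`, and since the equation is
invariant under `w ↦ τ l^(2/(p-1)) w(a + l ·)`, the rescaled piece with `l = b - a` is a
nonnegative nontrivial Dirichlet solution, i.e. equals `z`. The slopes of `w` at `a` and `b` are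
then `±z'(0) / (τ l^(2/(p-1)+1))` (`z'(1) = -z'(0)` by symmetry), so the slope at a zero determines
both `l` and `τ` of the nodal interval starting there: all nodal intervals have the same length
`L`, the signs alternate, and `L = 1/M`, i.e. `w = ±z⁽ᴹ⁾`. Conversely each piece of `z⁽ⁿ⁾` is
such a rescaling of `z`, so the equation holds off the break points `j/n` and, by continuity
of `w''`, everywhere.
-/

def SolvesOn (p : ℝ) (w : ℝ → ℝ) (s : Set ℝ) : Prop :=
  ∀ x ∈ s, deriv (deriv w) x + w x * |w x| ^ (p - 1) = 0

def NonnegSolutionsEq (p : ℝ) (z : ℝ → ℝ) : Prop :=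
  ∀ w : ℝ → ℝ, ContDiff ℝ 2 w → SolvesOn p w (Icc 0 1) → w 0 = 0 → w 1 = 0 →
    (∀ x ∈ Icc (0 : ℝ) 1, 0 ≤ w x) → (∃ x ∈ Icc (0 : ℝ) 1, w x ≠ 0) →
    ∀ x ∈ Icc (0 : ℝ) 1, w x = z x

lemma deriv_const_mul_comp_affine (w : ℝ → ℝ) (c d m t : ℝ) :
    deriv (fun s => c * w (d + m * s)) t = c * m * deriv w (d + m * t) := by
  rw [deriv_const_mul_field']
  have := deriv_comp_mul_left (f := fun u => w (d + u)) (x := t) m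
  simp only [smul_eq_mul] at this
  simp only [this, deriv_comp_const_add]
  ring

lemma residual_const_mul_comp_affine {p c m : ℝ} (hc : |c| ^ (p - 1) = m ^ 2)
    (w : ℝ → ℝ) (d t : ℝ) :
    deriv (deriv fun s => c * w (d + m * s)) t
        + c * w (d + m * t) * |c * w (d + m * t)| ^ (p - 1)
      = c * m ^ 2 * (deriv (deriv w) (d + m * t) + w (d + m * t) * |w (d + m * t)| ^ (p - 1)) := by
  have h₁ : deriv (fun s => c * w (d + m * s)) = fun s => c * m * deriv w (d + m * s) :=
    funext (deriv_const_mul_comp_affine w c d m)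
  rw [h₁, deriv_const_mul_comp_affine, abs_mul, Real.mul_rpow (abs_nonneg c) (abs_nonneg _), hc]
  ring

lemma SolvesOn.const_mul_comp_affine {p c d m : ℝ} {w : ℝ → ℝ} {s s' : Set ℝ}
    (h : SolvesOn p w s) (hc : |c| ^ (p - 1) = m ^ 2) (hmaps : MapsTo (fun t => d + m * t) s' s) :
    SolvesOn p (fun t => c * w (d + m * t)) s' := fun t ht => by
  rw [residual_const_mul_comp_affine hc, h _ (hmaps ht), mul_zero]

lemma abs_mul_rpow_two_div_sub_one {p k σ : ℝ} (hp : p ≠ 1) (hk : 0 ≤ k) (hσ : |σ| = 1) :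
    |σ * k ^ (2 / (p - 1))| ^ (p - 1) = k ^ 2 := by
  rw [abs_mul, hσ, one_mul, abs_of_nonneg (Real.rpow_nonneg hk _), ← Real.rpow_mul hk,
    div_mul_cancel₀ _ (sub_ne_zero.mpr hp), Real.rpow_two]

lemma deriv_eq_of_eqOn_Icc {f g : ℝ → ℝ} {a b x : ℝ} (hab : a < b) (hx : x ∈ Icc a b)
    (hfg : EqOn f g (Icc a b)) (hf : DifferentiableAt ℝ f x) (hg : DifferentiableAt ℝ g x) :
    deriv f x = deriv g x :=
  (uniqueDiffOn_Icc hab x hx).eq_deriv _ hf.hasDerivAt.hasDerivWithinAt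
    (hg.hasDerivAt.hasDerivWithinAt.congr_of_mem hfg hx)

lemma deriv_one_eq_neg_deriv_zero {z : ℝ → ℝ} (hz : Differentiable ℝ z)
    (hsymm : ∀ x ∈ Icc (0 : ℝ) 1, z x = z (1 - x)) : deriv z 1 = -deriv z 0 := by
  have := deriv_eq_of_eqOn_Icc zero_lt_one ⟨le_rfl, zero_le_one⟩ hsymm (hz 0)
    ((hz _).comp _ (by fun_prop))
  rw [this, deriv_comp_const_sub, sub_zero, neg_neg]

lemma deriv_eq_of_const_mul_comp_affine_eq {w z : ℝ → ℝ} {a c l : ℝ}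
    (hw : Differentiable ℝ w) (hz : Differentiable ℝ z)
    (h : ∀ t ∈ Icc (0 : ℝ) 1, c * w (a + l * t) = z t) :
    ∀ t ∈ Icc (0 : ℝ) 1, c * l * deriv w (a + l * t) = deriv z t := fun t ht => by
  rw [← deriv_const_mul_comp_affine]
  exact deriv_eq_of_eqOn_Icc zero_lt_one ht h (by fun_prop) (hz t)

section Energy

variable {p a b : ℝ} {w : ℝ → ℝ}

lemma SolvesOn.energy_eq (hp : 1 < p) (hw : ContDiff ℝ 2 w) (h : SolvesOn p w (Icc a b)) :
    ∀ x ∈ Icc a b, deriv w x ^ 2 / 2 + |w x| ^ (p + 1) / (p + 1)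
      = deriv w a ^ 2 / 2 + |w a| ^ (p + 1) / (p + 1) := by
  have hw₁ : Differentiable ℝ w := hw.differentiable (by norm_num)
  have hw₂ : Differentiable ℝ (deriv w) := hw.differentiable_deriv_two
  have hE : ∀ x, HasDerivAt (fun y => deriv w y ^ 2 / 2 + |w y| ^ (p + 1) / (p + 1))
      (deriv w x * (deriv (deriv w) x + w x * |w x| ^ (p - 1))) x := fun x => by
    have h₁ := ((hw₂ x).hasDerivAt.pow 2).div_const 2
    have h₂ := ((hasDerivAt_abs_rpow (w x) (by linarith : 1 < p + 1)).comp x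
      (hw₁ x).hasDerivAt).div_const (p + 1)
    refine (h₁.add h₂).congr_deriv ?_
    rw [show p + 1 - 2 = p - 1 by ring]
    field_simp
    ring
  refine constant_of_has_deriv_right_zero (fun x _ => (hE x).continuousAt.continuousWithinAt)
    fun x hx => ?_
  simpa [h x (Ico_subset_Icc_self hx)] using (hE x).hasDerivWithinAt

lemma SolvesOn.eqOn_zero_of_deriv_eq_zero (hp : 1 < p) (hw : ContDiff ℝ 2 w)
    (h : SolvesOn p w (Icc a b)) (hwa : w a = 0) (hda : deriv w a = 0) : EqOn w 0 (Icc a b) := by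
  intro x hx
  have hE := h.energy_eq hp hw x hx
  rw [hwa, hda, abs_zero, Real.zero_rpow (by linarith)] at hE
  norm_num at hE
  have hpot : |w x| ^ (p + 1) / (p + 1) = 0 := by
    have : 0 ≤ |w x| ^ (p + 1) / (p + 1) := div_nonneg (by positivity) (by linarith)
    nlinarith [sq_nonneg (deriv w x)]
  rw [div_eq_zero_iff, Real.rpow_eq_zero (abs_nonneg _) (by linarith), abs_eq_zero] at hpot
  exact hpot.resolve_right (by linarith)

end Energy

lemma exists_first_zero_right {f : ℝ → ℝ} {a c : ℝ} (hf : ContinuousOn f (Icc a c))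
    (hac : a < c) (hfc : f c = 0) (hiso : ∀ᶠ x in 𝓝[>] a, f x ≠ 0) :
    ∃ b ∈ Ioc a c, f b = 0 ∧ ∀ x ∈ Ioo a b, f x ≠ 0 := by
  obtain ⟨u, hau, hu⟩ := (nhdsGT_basis a).eventually_iff.mp hiso
  have huc : u ≤ c := not_lt.mp fun h => hu ⟨hac, h⟩ hfc
  set S := Icc u c ∩ f ⁻¹' {0}
  have hS : IsClosed S :=
    (hf.mono (Icc_subset_Icc_left hau.le)).preimage_isClosed_of_isClosed isClosed_Icc
      isClosed_singleton
  have hSbdd : BddBelow S := ⟨u, fun x hx => hx.1.1⟩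
  have hb : sInf S ∈ S := hS.csInf_mem ⟨c, ⟨huc, le_rfl⟩, hfc⟩ hSbdd
  refine ⟨sInf S, ⟨hau.trans_le hb.1.1, hb.1.2⟩, hb.2, fun x hx hfx => ?_⟩
  rcases lt_or_ge x u with hxu | hux
  · exact hu ⟨hx.1, hxu⟩ hfx
  · exact (csInf_le hSbdd ⟨⟨hux, hx.2.le.trans hb.1.2⟩, hfx⟩).not_gt hx.2

lemma IsPreconnected.exists_abs_eq_one_mul_eq_abs {f : ℝ → ℝ} {s : Set ℝ} (hs : IsPreconnected s)
    (hf : ContinuousOn f s) (hne : ∀ x ∈ s, f x ≠ 0) :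
    ∃ τ : ℝ, |τ| = 1 ∧ ∀ x ∈ s, τ * f x = |f x| := by
  rcases hs.eq_or_eq_neg_of_sq_eq hf (continuous_abs.comp_continuousOn hf)
    (fun x _ => by simp [sq_abs]) (fun hx => abs_ne_zero.mpr (hne _ hx)) with h | h
  · exact ⟨1, abs_one, fun x hx => by simpa using h hx⟩
  · exact ⟨-1, by simp, fun x hx => by simpa using congrArg Neg.neg (h hx)⟩

section NodalIntervals

variable {p a : ℝ} {z w : ℝ → ℝ}

lemma exists_rescaled_eq_of_zero (hp : 1 < p) (huniq : NonnegSolutionsEq p z)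
    (hw : ContDiff ℝ 2 w) (hsol : SolvesOn p w (Icc 0 1)) (hw1 : w 1 = 0)
    (ha : a ∈ Ico (0 : ℝ) 1) (hwa : w a = 0) (hda : deriv w a ≠ 0) :
    ∃ l τ : ℝ, 0 < l ∧ a + l ≤ 1 ∧ |τ| = 1 ∧ w (a + l) = 0 ∧
      ∀ t ∈ Icc (0 : ℝ) 1, τ * l ^ (2 / (p - 1)) * w (a + l * t) = z t := by
  have hiso : ∀ᶠ x in 𝓝[>] a, w x ≠ 0 := by
    have := ((hw.differentiable (by norm_num) a).hasDerivAt.eventually_ne hda (c := 0))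
    exact this.filter_mono (nhdsWithin_mono a fun x hx => ne_of_gt hx)
  obtain ⟨b, ⟨hab, hb1⟩, hwb, hne⟩ :=
    exists_first_zero_right hw.continuous.continuousOn ha.2 hw1 hiso
  obtain ⟨τ, hτ, hτw⟩ :=
    isPreconnected_Ioo.exists_abs_eq_one_mul_eq_abs hw.continuous.continuousOn hne
  set l := b - a
  have hl : 0 < l := sub_pos.mpr hab
  have hmaps : MapsTo (fun t => a + l * t) (Icc 0 1) (Icc a b) := fun t ht =>
    ⟨by nlinarith [ht.1], by nlinarith [ht.2]⟩
  have hτw' : ∀ y ∈ Icc a b, 0 ≤ τ * w y := by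
    intro y hy
    rcases eq_or_lt_of_le hy.1 with rfl | hay
    · simp [hwa]
    rcases eq_or_lt_of_le hy.2 with rfl | hyb
    · simp [hwb]
    exact (hτw y ⟨hay, hyb⟩).symm ▸ abs_nonneg _
  refine ⟨l, τ, hl, by linarith, hτ, by simpa [l] using hwb, huniq _ (by fun_prop) ?_ ?_ ?_ ?_ ?_⟩
  · exact hsol.const_mul_comp_affine (abs_mul_rpow_two_div_sub_one hp.ne' hl.le hτ)
      (hmaps.mono_right (Icc_subset_Icc ha.1 hb1))
  · simp [hwa]
  · simp [l, hwb]
  · intro t ht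
    calc 0 ≤ l ^ (2 / (p - 1)) * (τ * w (a + l * t)) :=
          mul_nonneg (Real.rpow_nonneg hl.le _) (hτw' _ (hmaps ht))
      _ = _ := by ring
  · refine ⟨1 / 2, ⟨by norm_num, by norm_num⟩, ?_⟩
    have hmid : a + l * (1 / 2) ∈ Ioo a b := ⟨by linarith, by linarith⟩
    have hτ0 : τ ≠ 0 := fun h => by simp [h] at hτ
    exact mul_ne_zero (mul_ne_zero hτ0 (Real.rpow_pos_of_pos hl _).ne') (hne _ hmid)

lemma rescaled_eq_of_slope (hp : 1 < p) (huniq : NonnegSolutionsEq p z)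
    (hz : Differentiable ℝ z) (hz0 : deriv z 0 ≠ 0) (hz1 : deriv z 1 = -deriv z 0)
    (hw : ContDiff ℝ 2 w) (hsol : SolvesOn p w (Icc 0 1)) (hw1 : w 1 = 0)
    (ha : a ∈ Ico (0 : ℝ) 1) (hwa : w a = 0) {σ L : ℝ} (hσ : |σ| = 1) (hL : 0 < L)
    (hslope : σ * L ^ (2 / (p - 1)) * L * deriv w a = deriv z 0) :
    a + L ≤ 1 ∧ w (a + L) = 0 ∧ -σ * L ^ (2 / (p - 1)) * L * deriv w (a + L) = deriv z 0 ∧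
      ∀ t ∈ Icc (0 : ℝ) 1, σ * L ^ (2 / (p - 1)) * w (a + L * t) = z t := by
  have hda : deriv w a ≠ 0 := fun h => hz0 (by rw [← hslope, h, mul_zero])
  obtain ⟨l, τ, hl, hal, hτ, hwl, hform⟩ :=
    exists_rescaled_eq_of_zero hp huniq hw hsol hw1 ha hwa hda
  have hder := deriv_eq_of_const_mul_comp_affine_eq (hw.differentiable (by norm_num)) hz hform
  have h₀ : τ * l ^ (2 / (p - 1)) * l * deriv w a = deriv z 0 := by
    simpa using hder 0 ⟨le_rfl, zero_le_one⟩
  have h₁ : τ * l ^ (2 / (p - 1)) * l * deriv w (a + l) = deriv z 1 := by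
    simpa using hder 1 ⟨zero_le_one, le_rfl⟩
  -- both coefficients equal `z'(0) / w'(a)`, and `r ↦ r ^ (2 / (p - 1) + 1)` is injective
  have hcoef : σ * (L ^ (2 / (p - 1)) * L) = τ * (l ^ (2 / (p - 1)) * l) :=
    mul_right_cancel₀ hda (by linear_combination hslope - h₀)
  have hpow : ∀ r : ℝ, 0 < r → r ^ (2 / (p - 1)) * r = r ^ (2 / (p - 1) + 1) := fun r hr =>
    (Real.rpow_add_one hr.ne' _).symm
  rw [hpow L hL, hpow l hl] at hcoef
  have hlL : l = L := by
    have := congrArg abs hcoef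
    rw [abs_mul, abs_mul, hσ, hτ, abs_of_pos (Real.rpow_pos_of_pos hL _),
      abs_of_pos (Real.rpow_pos_of_pos hl _), one_mul, one_mul] at this
    exact ((Real.rpow_left_inj hl.le hL.le (by positivity)).mp this.symm)
  subst hlL
  have hτσ : τ = σ := mul_right_cancel₀ (Real.rpow_pos_of_pos hl _).ne' hcoef.symm
  subst hτσ
  exact ⟨hal, hwl, by linear_combination -h₁ - hz1, hform⟩

end NodalIntervals

section Pattern

variable {p : ℝ} {z : ℝ → ℝ}

lemma zNat_eq_of_le_of_lt {k j : ℕ} {y : ℝ} (h₁ : (j : ℝ) ≤ k * y) (h₂ : k * y < j + 1) :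
    zNat p z k y = (-1) ^ j * (k : ℝ) ^ (2 / (p - 1)) * z (k * y - j) := by
  have hfl : ⌊(k : ℝ) * y⌋ = j := Int.floor_eq_iff.mpr ⟨by exact_mod_cast h₁, by exact_mod_cast h₂⟩
  have hfr : Int.fract ((k : ℝ) * y) = k * y - j := by rw [Int.fract, hfl]; simp
  rcases Nat.even_or_odd j with he | ho
  · simp [zNat, hfl, hfr, he, he.neg_one_pow]
  · simp [zNat, hfl, hfr, Nat.not_even_iff_odd.mpr ho, ho.neg_one_pow]

lemma zNat_eq_zero_of_fract_eq_zero (hz0 : z 0 = 0) {k : ℕ} {y : ℝ}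
    (h : Int.fract ((k : ℝ) * y) = 0) : zNat p z k y = 0 := by
  simp [zNat, h, hz0]

lemma zNat_zero_left (hp : p ≠ 1) (y : ℝ) : zNat p z 0 y = 0 := by
  simp [zNat, Real.zero_rpow (div_ne_zero two_ne_zero (sub_ne_zero.mpr hp))]

lemma zInt_exists_eq_mul_zNat (n : ℤ) :
    ∃ (k : ℕ) (ε : ℝ), |ε| = 1 ∧ ∀ y, zInt p z n y = ε * zNat p z k y := by
  rcases le_or_gt 0 n with hn | hn
  · exact ⟨n.toNat, 1, abs_one, fun y => by simp [zInt, hn]⟩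
  · exact ⟨(-n).toNat, -1, by simp, fun y => by simp [zInt, hn.not_ge]⟩

lemma exists_zInt_eq_mul_zNat {τ : ℝ} (hτ : |τ| = 1) {M : ℕ} (hM : 0 < M) :
    ∃ n : ℤ, ∀ y, zInt p z n y = τ * zNat p z M y := by
  rcases (abs_eq zero_le_one).mp hτ with rfl | rfl
  · exact ⟨M, fun y => by simp [zInt]⟩
  · exact ⟨-M, fun y => by simp [zInt, hM.ne']⟩

end Pattern

lemma eqOn_mul_zNat_of_pieces {p : ℝ} {z w : ℝ → ℝ} {M : ℕ} {L τ : ℝ} (hML : M * L = 1)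
    (hτ : |τ| = 1) (hz0 : z 0 = 0) (hw1 : w 1 = 0)
    (h : ∀ i < M, ∀ t ∈ Icc (0 : ℝ) 1, (-1) ^ i * τ * L ^ (2 / (p - 1)) * w (i * L + L * t) = z t) :
    ∀ x ∈ Icc (0 : ℝ) 1, w x = τ * zNat p z M x := by
  intro x hx
  rcases eq_or_lt_of_le hx.2 with rfl | hx1
  · rw [hw1, zNat_eq_zero_of_fract_eq_zero hz0 (by simp), mul_zero]
  have hL : 0 < L := pos_of_mul_pos_right (hML ▸ one_pos) (Nat.cast_nonneg M)
  have hM : (0 : ℝ) < M := pos_of_mul_pos_left (hML ▸ one_pos) hL.le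
  set i := ⌊(M : ℝ) * x⌋₊
  have hi₁ : (i : ℝ) ≤ M * x := Nat.floor_le (by positivity [hx.1])
  have hi₂ : (M : ℝ) * x < i + 1 := Nat.lt_floor_add_one _
  have hiM : i < M := (Nat.floor_lt (by positivity [hx.1])).mpr (by nlinarith)
  have hpiece := h i hiM (M * x - i) ⟨by linarith, by linarith⟩
  rw [show (i : ℝ) * L + L * (M * x - i) = x by linear_combination x * hML] at hpiece
  rw [zNat_eq_of_le_of_lt hi₁ hi₂, ← hpiece]
  have hτ2 : τ * τ = 1 := by rw [← abs_mul_abs_self, hτ, one_mul]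
  have hsign : ((-1 : ℝ) ^ i) * (-1) ^ i = 1 := by rw [← mul_pow]; norm_num
  have hscale : (M : ℝ) ^ (2 / (p - 1)) * L ^ (2 / (p - 1)) = 1 := by
    rw [← Real.mul_rpow hM.le hL.le, hML, Real.one_rpow]
  calc w x = (τ * τ) * ((-1) ^ i * (-1) ^ i) * (M ^ (2 / (p - 1)) * L ^ (2 / (p - 1))) * w x := by
        rw [hτ2, hsign, hscale, one_mul, one_mul, one_mul]
    _ = _ := by ring

theorem exists_eqOn_mul_zNat {p : ℝ} (hp : 1 < p) {z w : ℝ → ℝ} (huniq : NonnegSolutionsEq p z)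
    (hz : Differentiable ℝ z) (hz00 : z 0 = 0) (hz0 : deriv z 0 ≠ 0)
    (hz1 : deriv z 1 = -deriv z 0) (hw : ContDiff ℝ 2 w) (hsol : SolvesOn p w (Icc 0 1))
    (hw0 : w 0 = 0) (hw1 : w 1 = 0) (hd0 : deriv w 0 ≠ 0) :
    ∃ (M : ℕ) (τ : ℝ), 0 < M ∧ |τ| = 1 ∧ ∀ x ∈ Icc (0 : ℝ) 1, w x = τ * zNat p z M x := by
  obtain ⟨L, τ, hL, -, hτ, -, hform⟩ :=
    exists_rescaled_eq_of_zero hp huniq hw hsol hw1 ⟨le_rfl, one_pos⟩ hw0 hd0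
  have hslope₀ : τ * L ^ (2 / (p - 1)) * L * deriv w 0 = deriv z 0 := by
    simpa using deriv_eq_of_const_mul_comp_affine_eq (hw.differentiable (by norm_num)) hz hform 0
      ⟨le_rfl, zero_le_one⟩
  have hσ : ∀ j : ℕ, |(-1) ^ j * τ| = 1 := fun j => by simp [abs_mul, hτ]
  have step := fun (j : ℕ) (hj : (j : ℝ) * L < 1) (hwj : w (j * L) = 0) =>
    rescaled_eq_of_slope hp huniq hz hz0 hz1 hw hsol hw1 ⟨by positivity, hj⟩ hwj (hσ j) hL
  have hzeros : ∀ j : ℕ, (j : ℝ) * L ≤ 1 →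
      w (j * L) = 0 ∧ (-1) ^ j * τ * L ^ (2 / (p - 1)) * L * deriv w (j * L) = deriv z 0 := by
    intro j
    induction j with
    | zero => exact fun _ => by simpa using ⟨hw0, hslope₀⟩
    | succ j ih =>
      intro hj
      have hjL : (j : ℝ) * L < 1 := by push_cast at hj; linarith
      obtain ⟨-, hwz, hsl, -⟩ := step j hjL (ih hjL.le).1 (ih hjL.le).2
      rw [show ((j + 1 : ℕ) : ℝ) * L = j * L + L by push_cast; ring]
      exact ⟨hwz, by rw [pow_succ]; linear_combination hsl⟩
  set M := ⌊1 / L⌋₊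
  have hML : (M : ℝ) * L = 1 := by
    have hle : (M : ℝ) * L ≤ 1 := (le_div_iff₀ hL).mp (Nat.floor_le (by positivity))
    refine hle.antisymm (not_lt.mp fun hlt => ?_)
    obtain ⟨hnext, -⟩ := step M hlt (hzeros M hle).1 (hzeros M hle).2
    have := Nat.lt_floor_add_one (1 / L)
    rw [div_lt_iff₀ hL] at this
    linarith
  refine ⟨M, τ, Nat.cast_pos.mp (pos_of_mul_pos_left (hML ▸ one_pos) hL.le), hτ,
    eqOn_mul_zNat_of_pieces hML hτ hz00 hw1 fun i hi t ht => ?_⟩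
  have hiL : (i : ℝ) * L < 1 := by
    rw [← hML]; exact mul_lt_mul_of_pos_right (Nat.cast_lt.mpr hi) hL
  exact (step i hiL (hzeros i hiL.le).1 (hzeros i hiL.le).2).2.2.2 t ht

lemma SolvesOn.of_locally_rescaled {p : ℝ} (hp : 1 < p) {w z : ℝ → ℝ} {s t D : Set ℝ}
    (hw : ContDiff ℝ 2 w) (hz : SolvesOn p z t) (hsD : s ⊆ closure D)
    (hloc : ∀ x ∈ D, ∃ c d m : ℝ, |c| ^ (p - 1) = m ^ 2 ∧ d + m * x ∈ t ∧
      w =ᶠ[𝓝 x] fun y => c * z (d + m * y)) :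
    SolvesOn p w s := by
  have hcont : Continuous fun x => deriv (deriv w) x + w x * |w x| ^ (p - 1) :=
    ((hw.deriv' (n := 1)).continuous_deriv le_rfl).add (hw.continuous.mul
      ((continuous_abs.comp hw.continuous).rpow_const fun _ => Or.inr (by linarith)))
  have hD : EqOn (fun x => deriv (deriv w) x + w x * |w x| ^ (p - 1)) 0 D := by
    intro x hx
    obtain ⟨c, d, m, hc, hxt, hev⟩ := hloc x hx
    show deriv (deriv w) x + w x * |w x| ^ (p - 1) = 0
    rw [hev.deriv.deriv_eq, hev.eq_of_nhds, residual_const_mul_comp_affine hc,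
      hz _ hxt, mul_zero]
  exact fun x hx => hD.closure hcont continuous_const (hsD hx)

lemma Icc_subset_closure_Ioo_diff_range_div (k : ℕ) :
    Icc (0 : ℝ) 1 ⊆ closure (Ioo 0 1 ∩ (range fun j : ℕ => (j : ℝ) / k)ᶜ) := by
  have hdense : Dense (range fun j : ℕ => (j : ℝ) / k)ᶜ := (countable_range _).dense_compl ℝ
  rw [← closure_Ioo zero_ne_one]
  exact closure_minimal (hdense.open_subset_closure_inter isOpen_Ioo) isClosed_closure

theorem solvesOn_of_eqOn_mul_zNat {p : ℝ} (hp : 1 < p) {z w : ℝ → ℝ}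
    (hz : SolvesOn p z (Icc 0 1)) (hw : ContDiff ℝ 2 w) {ε : ℝ} (hε : |ε| = 1) (k : ℕ)
    (h : ∀ x ∈ Icc (0 : ℝ) 1, w x = ε * zNat p z k x) : SolvesOn p w (Icc 0 1) := by
  refine hz.of_locally_rescaled hp hw (Icc_subset_closure_Ioo_diff_range_div k) ?_
  rintro x ⟨hx, hxk⟩
  have hIoo : ∀ᶠ y in 𝓝 x, y ∈ Icc (0 : ℝ) 1 :=
    mem_of_superset (Ioo_mem_nhds hx.1 hx.2) Ioo_subset_Icc_self
  rcases k.eq_zero_or_pos with rfl | hk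
  · refine ⟨0, 0, 0, by simp [Real.zero_rpow (sub_ne_zero.mpr hp.ne')], by simp, ?_⟩
    filter_upwards [hIoo] with y hy
    simp [h y hy, zNat_zero_left hp.ne']
  set j := ⌊(k : ℝ) * x⌋₊
  have hk' : (0 : ℝ) < k := Nat.cast_pos.mpr hk
  have hj₁ : (j : ℝ) < k * x := by
    refine (Nat.floor_le (by positivity [hx.1.le])).lt_of_ne fun hjx => hxk ⟨j, ?_⟩
    field_simp
    linarith
  have hj₂ : (k : ℝ) * x < j + 1 := Nat.lt_floor_add_one _
  refine ⟨ε * (-1) ^ j * (k : ℝ) ^ (2 / (p - 1)), -j, k, ?_, ?_, ?_⟩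
  · exact abs_mul_rpow_two_div_sub_one hp.ne' hk'.le (by rw [abs_mul, hε]; simp)
  · constructor <;> linarith
  · have hnear : ∀ᶠ y in 𝓝 x, (j : ℝ) < k * y ∧ k * y < j + 1 :=
      (isOpen_lt continuous_const (continuous_const_mul _)).inter
        (isOpen_lt (continuous_const_mul _) continuous_const) |>.mem_nhds ⟨hj₁, hj₂⟩
    filter_upwards [hIoo, hnear] with y hy ⟨hy₁, hy₂⟩
    rw [h y hy, zNat_eq_of_le_of_lt hy₁.le hy₂]
    ring_nf

theorem solvesOn_of_eqOn_zInt {p : ℝ} (hp : 1 < p) {z w : ℝ → ℝ} (hz : SolvesOn p z (Icc 0 1))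
    (hz0 : z 0 = 0) (hw : ContDiff ℝ 2 w) (n : ℤ)
    (h : ∀ x ∈ Icc (0 : ℝ) 1, w x = zInt p z n x) :
    SolvesOn p w (Icc 0 1) ∧ w 0 = 0 ∧ w 1 = 0 := by
  obtain ⟨k, ε, hε, hk⟩ := zInt_exists_eq_mul_zNat (p := p) (z := z) n
  have hwk : ∀ x ∈ Icc (0 : ℝ) 1, w x = ε * zNat p z k x := fun x hx => (h x hx).trans (hk x)
  refine ⟨solvesOn_of_eqOn_mul_zNat hp hz hw hε k hwk, ?_, ?_⟩
  · rw [hwk 0 ⟨le_rfl, zero_le_one⟩, zNat_eq_zero_of_fract_eq_zero hz0 (by simp), mul_zero]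
  · rw [hwk 1 ⟨zero_le_one, le_rfl⟩, zNat_eq_zero_of_fract_eq_zero hz0 (by simp), mul_zero]

theorem stmt0_general (p : ℝ) (hp : 1 < p) (z : ℝ → ℝ)
    (hz_smooth : ContDiff ℝ 2 z)
    (hz_eq : ∀ x ∈ Icc (0:ℝ) 1, deriv (deriv z) x + z x * |z x| ^ (p - 1) = 0)
    (hz0 : z 0 = 0)
    (hz_pos : ∀ x ∈ Ioo (0:ℝ) 1, 0 < z x)
    (hz_symm : ∀ x ∈ Icc (0:ℝ) 1, z x = z (1 - x))
    (hz_unique : ∀ w : ℝ → ℝ, ContDiff ℝ 2 w →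
      (∀ x ∈ Icc (0:ℝ) 1, deriv (deriv w) x + w x * |w x| ^ (p - 1) = 0) →
      w 0 = 0 → w 1 = 0 → (∀ x ∈ Icc (0:ℝ) 1, 0 ≤ w x) →
      (∃ x ∈ Icc (0:ℝ) 1, w x ≠ 0) →
      ∀ x ∈ Icc (0:ℝ) 1, w x = z x)
    (w : ℝ → ℝ) (hw_smooth : ContDiff ℝ 2 w) :
    ((∀ x ∈ Icc (0:ℝ) 1, deriv (deriv w) x + w x * |w x| ^ (p - 1) = 0) ∧
        w 0 = 0 ∧ w 1 = 0) ↔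
      ∃ n : ℤ, ∀ x ∈ Icc (0:ℝ) 1, w x = zInt p z n x := by
  have hzd : Differentiable ℝ z := hz_smooth.differentiable (by norm_num)
  constructor
  · rintro ⟨hsol, hw0, hw1⟩
    by_cases hd0 : deriv w 0 = 0
    · refine ⟨0, fun x hx => ?_⟩
      rw [SolvesOn.eqOn_zero_of_deriv_eq_zero hp hw_smooth hsol hw0 hd0 hx]
      simp [zInt, zNat_zero_left hp.ne']
    have hz'0 : deriv z 0 ≠ 0 := fun h => (hz_pos (1 / 2) ⟨by norm_num, by norm_num⟩).ne'
      (SolvesOn.eqOn_zero_of_deriv_eq_zero hp hz_smooth hz_eq hz0 h ⟨by norm_num, by norm_num⟩)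
    obtain ⟨M, τ, hM, hτ, hwM⟩ := exists_eqOn_mul_zNat hp hz_unique hzd hz0 hz'0
      (deriv_one_eq_neg_deriv_zero hzd hz_symm) hw_smooth hsol hw0 hw1 hd0
    obtain ⟨n, hn⟩ := exists_zInt_eq_mul_zNat (p := p) (z := z) hτ hM
    exact ⟨n, fun x hx => (hwM x hx).trans (hn x).symm⟩
  · rintro ⟨n, hn⟩
    exact solvesOn_of_eqOn_zInt hp hz_eq hz0 hw_smooth n hn

/-- A twice continuously differentiable `w` with homogeneous Dirichlet boundary conditions
satisfies `w'' + w|w|^{p-1} = 0` on `[0,1]` if and only if `w = z⁽ⁿ⁾` for some `n : ℤ`,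
where `z` is the unique nonnegative nontrivial solution. -/
theorem stmt0 (p : ℝ) (hp : 1 < p) (z : ℝ → ℝ)
    (hz_smooth : ContDiff ℝ 2 z)
    (hz_eq : ∀ x ∈ Icc (0:ℝ) 1, deriv (deriv z) x + z x * |z x| ^ (p - 1) = 0)
    (hz0 : z 0 = 0) (hz1 : z 1 = 0)
    (hz_pos : ∀ x ∈ Ioo (0:ℝ) 1, 0 < z x)
    (hz_symm : ∀ x ∈ Icc (0:ℝ) 1, z x = z (1 - x))
    (hz_unique : ∀ w : ℝ → ℝ, ContDiff ℝ 2 w →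
      (∀ x ∈ Icc (0:ℝ) 1, deriv (deriv w) x + w x * |w x| ^ (p - 1) = 0) →
      w 0 = 0 → w 1 = 0 → (∀ x ∈ Icc (0:ℝ) 1, 0 ≤ w x) →
      (∃ x ∈ Icc (0:ℝ) 1, w x ≠ 0) →
      ∀ x ∈ Icc (0:ℝ) 1, w x = z x)
    (w : ℝ → ℝ) (hw_smooth : ContDiff ℝ 2 w) :
    ((∀ x ∈ Icc (0:ℝ) 1, deriv (deriv w) x + w x * |w x| ^ (p - 1) = 0) ∧
        w 0 = 0 ∧ w 1 = 0) ↔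
      ∃ n : ℤ, ∀ x ∈ Icc (0:ℝ) 1, w x = zInt p z n x :=
  stmt0_general p hp z hz_smooth hz_eq hz0 hz_pos hz_symm hz_unique w hw_smooth
end

section
/- Let p > 1 and let z : [0,1] → ℝ be continuously differentiable with z(0) = z(1) = 0 and z(x) = z(1-x) for all x ∈ [0,1]. Then for every n ∈ ℤ the function z^{(n)} is continuously differentiable and satisfies ‖z^{(n)}‖_∞ = |n|^{2/(p-1)} ‖z‖_∞ and S(z^{(n)}) = |n|^{2(p+1)/(p-1)} S(z), where ‖·‖_∞ denotes the supremum norm on [0,1]. -/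
open Set

/-- The supremum norm on `[0,1]`. -/
noncomputable def supNorm01 (v : ℝ → ℝ) : ℝ :=
  sSup ((fun x => |v x|) '' Icc (0:ℝ) 1)

/-- The potential `S(v) = ∫₀¹ ((1/2) v'(x)² − |v(x)|^{p+1}/(p+1)) dx`. -/
noncomputable def potS (p : ℝ) (v : ℝ → ℝ) : ℝ :=
  ∫ x in (0:ℝ)..1, ((1/2) * (deriv v x) ^ 2 - |v x| ^ (p + 1) / (p + 1))

/-!
Let `G x = (-1)^⌊x⌋ z(fract x)` be the antiperiodic extension of `z`, so that
`z⁽ⁿ⁾(x) = ± |n|^(2/(p-1)) G(|n| x)`. On each `[k, k+1]` the function `G` is `±z(· - k)`, and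
since `z 1 = -z 0` and (by the symmetry of `z`) `z'(1) = -z'(0)`, neighbouring pieces agree to first
order at the integers; hence `G` is `C¹` with derivative the antiperiodic extension of `z'`.
As `|G|` takes on `[0, |n|]` exactly the values of `|z|` on `[0, 1]`, the sup norm scales by
`|n|^(2/(p-1))`. The integrand of `S(z⁽ⁿ⁾)` at `x` is `|n|^(2(p+1)/(p-1))` times a `1`-periodic
function evaluated at `|n| x`, whose mean over `[0, 1]` is `S(z)`.
-/

open Filter Topology Function

noncomputable def antiperiodicExt (w : ℝ → ℝ) (x : ℝ) : ℝ := (-1 : ℝ) ^ ⌊x⌋ * w (Int.fract x)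

section AntiperiodicExt

variable {w : ℝ → ℝ}

theorem antiperiodicExt_antiperiodic (w : ℝ → ℝ) : Antiperiodic (antiperiodicExt w) 1 := by
  intro x
  simp only [antiperiodicExt, Int.floor_add_one, Int.fract_add_one,
    zpow_add_one₀ (by norm_num : (-1 : ℝ) ≠ 0)]
  ring

theorem abs_antiperiodicExt (w : ℝ → ℝ) (x : ℝ) :
    |antiperiodicExt w x| = |w (Int.fract x)| := by
  simp [antiperiodicExt, abs_mul]

theorem antiperiodicExt_eqOn_Icc (hw : w 1 = -w 0) (k : ℤ) :
    EqOn (antiperiodicExt w) (fun y => (-1 : ℝ) ^ k * w (y - k)) (Icc k (k + 1)) := by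
  rintro y ⟨hky, hyk⟩
  rcases hyk.lt_or_eq with hyk | rfl
  · have hfloor : ⌊y⌋ = k := Int.floor_eq_iff.mpr ⟨hky, hyk⟩
    simp [antiperiodicExt, Int.fract, hfloor]
  · have hfloor : ⌊(k : ℝ) + 1⌋ = k + 1 := by exact_mod_cast Int.floor_intCast (k + 1)
    simp [antiperiodicExt, hfloor, Int.fract, hw, zpow_add_one₀]

-- At an integer `x` the two intervals lie on either side of `x`; otherwise they coincide.
theorem exists_Icc_union_Icc_mem_nhds (x : ℝ) : ∃ a b : ℤ,
    x ∈ Icc (a : ℝ) (a + 1) ∧ x ∈ Icc (b : ℝ) (b + 1) ∧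
      Icc (a : ℝ) (a + 1) ∪ Icc (b : ℝ) (b + 1) ∈ 𝓝 x := by
  have hceil := Int.ceil_lt_add_one x
  have hfloor := Int.lt_floor_add_one x
  refine ⟨⌈x⌉ - 1, ⌊x⌋, ?_, ⟨Int.floor_le x, hfloor.le⟩,
    mem_of_superset (Icc_mem_nhds (a := (⌈x⌉ : ℝ) - 1) (b := ⌊x⌋ + 1) ?_ hfloor) ?_⟩
  · push_cast
    exact ⟨by linarith, by linarith [Int.le_ceil x]⟩
  · linarith
  · rintro y ⟨hy₁, hy₂⟩
    rcases le_or_gt y ⌈x⌉ with hy | hy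
    · left; push_cast; exact ⟨hy₁, by linarith⟩
    · right; exact ⟨by linarith [(Int.cast_le (R := ℝ)).2 (Int.floor_le_ceil x)], hy₂⟩

theorem continuous_antiperiodicExt (hw : Continuous w) (h : w 1 = -w 0) :
    Continuous (antiperiodicExt w) := by
  refine continuous_iff_continuousAt.2 fun x => ?_
  have piece (k : ℤ) (hx : x ∈ Icc (k : ℝ) (k + 1)) :
      ContinuousWithinAt (antiperiodicExt w) (Icc k (k + 1)) x :=
    (by fun_prop : Continuous fun y => (-1 : ℝ) ^ k * w (y - k)).continuousWithinAt.congr_of_mem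
      (antiperiodicExt_eqOn_Icc h k) hx
  obtain ⟨a, b, ha, hb, hnhds⟩ := exists_Icc_union_Icc_mem_nhds x
  exact ((piece a ha).union (piece b hb)).continuousAt hnhds

theorem hasDerivAt_antiperiodicExt (hw : Differentiable ℝ w) (h : w 1 = -w 0)
    (h' : deriv w 1 = -deriv w 0) (x : ℝ) :
    HasDerivAt (antiperiodicExt w) (antiperiodicExt (deriv w) x) x := by
  have piece (k : ℤ) (hx : x ∈ Icc (k : ℝ) (k + 1)) :
      HasDerivWithinAt (antiperiodicExt w) (antiperiodicExt (deriv w) x) (Icc k (k + 1)) x := by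
    have hderiv :
        HasDerivAt (fun y => (-1 : ℝ) ^ k * w (y - k)) ((-1 : ℝ) ^ k * deriv w (x - k)) x :=
      ((hw _).hasDerivAt.comp_sub_const x _).const_mul _
    rw [antiperiodicExt_eqOn_Icc h' k hx]
    exact hderiv.hasDerivWithinAt.congr_of_mem (antiperiodicExt_eqOn_Icc h k) hx
  obtain ⟨a, b, ha, hb, hnhds⟩ := exists_Icc_union_Icc_mem_nhds x
  exact ((piece a ha).union (piece b hb)).hasDerivAt hnhds

theorem contDiff_antiperiodicExt (hw : ContDiff ℝ 1 w) (h : w 1 = -w 0)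
    (h' : deriv w 1 = -deriv w 0) : ContDiff ℝ 1 (antiperiodicExt w) := by
  have hderiv := hasDerivAt_antiperiodicExt (hw.differentiable one_ne_zero) h h'
  refine contDiff_one_iff_deriv.2 ⟨fun x => (hderiv x).differentiableAt, ?_⟩
  rw [show deriv (antiperiodicExt w) = antiperiodicExt (deriv w) from
    funext fun x => (hderiv x).deriv]
  exact continuous_antiperiodicExt (hw.continuous_deriv le_rfl) h'

end AntiperiodicExt

theorem deriv_one_eq_neg_deriv_zero_of_symm {z : ℝ → ℝ} (h0 : DifferentiableAt ℝ z 0)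
    (h1 : DifferentiableAt ℝ z 1) (hsymm : ∀ x ∈ Icc (0 : ℝ) 1, z x = z (1 - x)) :
    deriv z 1 = -deriv z 0 := by
  have hreflect : HasDerivWithinAt z (-deriv z 0) (Icc 0 1) 1 := by
    have := HasDerivAt.comp_const_sub (1 : ℝ) (1 : ℝ) (by rw [sub_self]; exact h0.hasDerivAt)
    exact this.hasDerivWithinAt.congr_of_mem hsymm (right_mem_Icc.2 zero_le_one)
  exact (uniqueDiffOn_Icc zero_lt_one 1 (right_mem_Icc.2 zero_le_one)).eq_deriv _
    h1.hasDerivAt.hasDerivWithinAt hreflect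

theorem Function.Periodic.intervalIntegral_comp_natCast_mul {F : ℝ → ℝ} (hF : Periodic F 1)
    (hcont : Continuous F) {m : ℕ} (hm : m ≠ 0) :
    ∫ x in (0 : ℝ)..1, F (m * x) = ∫ x in (0 : ℝ)..1, F x := by
  have hm' : (m : ℝ) ≠ 0 := Nat.cast_ne_zero.2 hm
  have := hF.intervalIntegral_add_zsmul_eq m 0 fun _ _ => hcont.intervalIntegrable _ _
  simp only [zero_add, Int.cast_natCast, zsmul_eq_mul, mul_one] at this
  rw [intervalIntegral.integral_comp_mul_left F hm', mul_zero, mul_one, this, smul_eq_mul,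
    inv_mul_cancel_left₀ hm']

theorem supNorm01_const_mul {c : ℝ} (hc : 0 ≤ c) (v : ℝ → ℝ) :
    supNorm01 (fun x => c * v x) = c * supNorm01 v := by
  simp only [supNorm01, abs_mul, abs_of_nonneg hc]
  rw [← smul_eq_mul, ← Real.sSup_smul_of_nonneg hc, ← Set.image_smul, Set.image_image]
  rfl

theorem supNorm01_neg (v : ℝ → ℝ) : supNorm01 (-v) = supNorm01 v := by
  simp [supNorm01]

theorem supNorm01_antiperiodicExt_comp_mul {w : ℝ → ℝ} (h : w 1 = -w 0) {m : ℕ} (hm : m ≠ 0) :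
    supNorm01 (fun x => antiperiodicExt w (m * x)) = supNorm01 w := by
  have hm' : (m : ℝ) ≠ 0 := Nat.cast_ne_zero.2 hm
  have hm1 : (1 : ℝ) ≤ m := Nat.one_le_cast.2 (Nat.one_le_iff_ne_zero.2 hm)
  unfold supNorm01
  congr 1
  apply Subset.antisymm
  · rintro _ ⟨x, -, rfl⟩
    exact ⟨Int.fract (m * x), ⟨Int.fract_nonneg _, (Int.fract_lt_one _).le⟩,
      (abs_antiperiodicExt w _).symm⟩
  · rintro _ ⟨t, ⟨ht0, ht1⟩, rfl⟩
    refine ⟨t / m, ⟨by positivity, (div_le_one₀ (by positivity)).2 (ht1.trans hm1)⟩, ?_⟩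
    have ht : t ∈ Icc ((0 : ℤ) : ℝ) ((0 : ℤ) + 1) := by simpa using ⟨ht0, ht1⟩
    simp only [mul_div_cancel₀ t hm', antiperiodicExt_eqOn_Icc h 0 ht]
    simp

noncomputable def lagrangian (p a b : ℝ) : ℝ := 1 / 2 * a ^ 2 - |b| ^ (p + 1) / (p + 1)

theorem potS_eq_integral_lagrangian (p : ℝ) (v : ℝ → ℝ) :
    potS p v = ∫ x in (0 : ℝ)..1, lagrangian p (deriv v x) (v x) := rfl

theorem lagrangian_neg (p a b : ℝ) : lagrangian p (-a) (-b) = lagrangian p a b := by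
  simp [lagrangian]

theorem lagrangian_rescale {p m : ℝ} (hp : 1 < p) (hm : 0 ≤ m) (a b : ℝ) :
    lagrangian p (m ^ (2 / (p - 1)) * (a * m)) (m ^ (2 / (p - 1)) * b)
      = m ^ (2 * (p + 1) / (p - 1)) * lagrangian p a b := by
  have hp1 : 0 < p - 1 := by linarith
  have hsq : (m ^ (2 / (p - 1))) ^ 2 * m ^ 2 = m ^ (2 * (p + 1) / (p - 1)) := by
    rcases hm.eq_or_lt with rfl | hm
    · rw [Real.zero_rpow (div_pos (by linarith : 0 < 2 * (p + 1)) hp1).ne']; simp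
    rw [← Real.rpow_natCast, ← Real.rpow_natCast, ← Real.rpow_mul hm.le, ← Real.rpow_add hm]
    congr 1; push_cast; field_simp; ring
  have hpow : (m ^ (2 / (p - 1))) ^ (p + 1) = m ^ (2 * (p + 1) / (p - 1)) := by
    rw [← Real.rpow_mul hm]; congr 1; field_simp
  simp only [lagrangian, abs_mul, abs_of_nonneg (Real.rpow_nonneg hm _),
    Real.mul_rpow (Real.rpow_nonneg hm _) (abs_nonneg b), hpow, ← hsq]
  ring

theorem potS_neg (p : ℝ) (v : ℝ → ℝ) : potS p (-v) = potS p v := by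
  simp only [potS_eq_integral_lagrangian, deriv.neg', Pi.neg_apply, lagrangian_neg]

theorem zNat_eq (p : ℝ) (z : ℝ → ℝ) (m : ℕ) :
    zNat p z m = fun x => (m : ℝ) ^ (2 / (p - 1)) * antiperiodicExt z (m * x) := by
  funext x
  rcases Int.even_or_odd ⌊(m : ℝ) * x⌋ with h | h
  · simp [zNat, antiperiodicExt, h, h.neg_one_zpow]
  · simp [zNat, antiperiodicExt, Int.not_even_iff_odd.2 h, h.neg_one_zpow]

theorem zInt_eq_or_eq_neg (p : ℝ) (z : ℝ → ℝ) (n : ℤ) :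
    zInt p z n = zNat p z n.natAbs ∨ zInt p z n = -zNat p z n.natAbs := by
  unfold zInt
  rcases le_or_gt 0 n with hn | hn
  · left; funext x; simp [hn, show n.toNat = n.natAbs by omega]
  · right; funext x; simp [hn.not_ge, show (-n).toNat = n.natAbs by omega]

section Rescaling

variable {p : ℝ} {z : ℝ → ℝ}

theorem contDiff_zNat (hz : ContDiff ℝ 1 z) (h : z 1 = -z 0) (h' : deriv z 1 = -deriv z 0)
    (m : ℕ) : ContDiff ℝ 1 (zNat p z m) := by
  rw [zNat_eq]
  exact contDiff_const.mul
    ((contDiff_antiperiodicExt hz h h').comp (contDiff_const.mul contDiff_id))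

theorem supNorm01_zNat (hp : 1 < p) (h : z 1 = -z 0) (m : ℕ) :
    supNorm01 (zNat p z m) = (m : ℝ) ^ (2 / (p - 1)) * supNorm01 z := by
  rw [zNat_eq, supNorm01_const_mul (Real.rpow_nonneg (Nat.cast_nonneg m) _)]
  rcases eq_or_ne m 0 with rfl | hm
  · rw [Nat.cast_zero, Real.zero_rpow (div_pos two_pos (by linarith)).ne', zero_mul, zero_mul]
  · rw [supNorm01_antiperiodicExt_comp_mul h hm]

theorem potS_zNat (hp : 1 < p) (hz : ContDiff ℝ 1 z) (h : z 1 = -z 0)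
    (h' : deriv z 1 = -deriv z 0) (m : ℕ) :
    potS p (zNat p z m) = (m : ℝ) ^ (2 * (p + 1) / (p - 1)) * potS p z := by
  set F : ℝ → ℝ := fun y => lagrangian p (antiperiodicExt (deriv z) y) (antiperiodicExt z y)
  have hderiv (x : ℝ) : deriv (zNat p z m) x
      = (m : ℝ) ^ (2 / (p - 1)) * (antiperiodicExt (deriv z) (m * x) * m) := by
    have hG := hasDerivAt_antiperiodicExt (hz.differentiable one_ne_zero) h h' (m * x)
    rw [zNat_eq]
    exact ((hG.comp x ((hasDerivAt_id x).const_mul (m : ℝ))).const_mul _).deriv.trans (by simp)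
  have hperiodic : Periodic F 1 := fun y => by
    simp only [F, antiperiodicExt_antiperiodic _ y, lagrangian_neg]
  have hcont : Continuous F :=
    (continuous_const.mul ((continuous_antiperiodicExt (hz.continuous_deriv le_rfl) h').pow 2)).sub
      (((continuous_antiperiodicExt hz.continuous h).abs.rpow_const
        fun _ => Or.inr (by linarith)).div_const _)
  have hF_integral : ∫ y in (0 : ℝ)..1, F y = potS p z := by
    refine intervalIntegral.integral_congr fun y hy => ?_
    have hy' : y ∈ Icc ((0 : ℤ) : ℝ) ((0 : ℤ) + 1) := by simpa using hy
    simp [F, antiperiodicExt_eqOn_Icc h 0 hy', antiperiodicExt_eqOn_Icc h' 0 hy', lagrangian]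
  calc potS p (zNat p z m)
      = ∫ x in (0 : ℝ)..1, (m : ℝ) ^ (2 * (p + 1) / (p - 1)) * F (m * x) := by
        rw [potS_eq_integral_lagrangian]
        congr 1 with x
        rw [hderiv, zNat_eq]
        exact lagrangian_rescale hp (Nat.cast_nonneg m) _ _
    _ = (m : ℝ) ^ (2 * (p + 1) / (p - 1)) * ∫ x in (0 : ℝ)..1, F (m * x) :=
        intervalIntegral.integral_const_mul _ _
    _ = (m : ℝ) ^ (2 * (p + 1) / (p - 1)) * potS p z := by
        rcases eq_or_ne m 0 with rfl | hm
        · rw [Nat.cast_zero, Real.zero_rpow (div_pos (by linarith) (by linarith)).ne', zero_mul,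
            zero_mul]
        · rw [hperiodic.intervalIntegral_comp_natCast_mul hcont hm, hF_integral]

end Rescaling

theorem stmt1 (p : ℝ) (hp : 1 < p) (z : ℝ → ℝ) (hz : ContDiff ℝ 1 z)
    (hz0 : z 0 = 0) (hz1 : z 1 = 0)
    (hsymm : ∀ x ∈ Icc (0:ℝ) 1, z x = z (1 - x)) (n : ℤ) :
    ContDiffOn ℝ 1 (zInt p z n) (Icc (0:ℝ) 1) ∧
    supNorm01 (zInt p z n) = |(n : ℝ)| ^ (2 / (p - 1)) * supNorm01 z ∧
    potS p (zInt p z n) = |(n : ℝ)| ^ (2 * (p + 1) / (p - 1)) * potS p z := by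
  have h : z 1 = -z 0 := by rw [hz0, hz1, neg_zero]
  have h' : deriv z 1 = -deriv z 0 :=
    deriv_one_eq_neg_deriv_zero_of_symm (hz.differentiable one_ne_zero 0)
      (hz.differentiable one_ne_zero 1) hsymm
  have hnat : ContDiffOn ℝ 1 (zNat p z n.natAbs) (Icc 0 1) ∧
      supNorm01 (zNat p z n.natAbs) = (n.natAbs : ℝ) ^ (2 / (p - 1)) * supNorm01 z ∧
      potS p (zNat p z n.natAbs) = (n.natAbs : ℝ) ^ (2 * (p + 1) / (p - 1)) * potS p z :=
    ⟨(contDiff_zNat hz h h' _).contDiffOn, supNorm01_zNat hp h _, potS_zNat hp hz h h' _⟩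
  rw [← Int.cast_abs, ← Int.natCast_natAbs, Int.cast_natCast]
  rcases zInt_eq_or_eq_neg p z n with hn | hn <;> rw [hn]
  · exact hnat
  · exact ⟨hnat.1.neg, by rw [supNorm01_neg, hnat.2.1], by rw [potS_neg, hnat.2.2]⟩
end

section
/- Let p > 1, M > 0 and δ > 0, and set T := δ/4 + 2^{(p+1)/2}(p+1) / ( (p-1)² (Mδ)^{(p-1)/2} ). Then there is no differentiable function y : [0,T] → ℝ with y(0) ≥ 0 satisfying y'(t) ≥ 2M + ((p-1)/(p+1)) (max(y(t),0))^{(p+1)/2} for all t ∈ [0,T]; that is, every solution of the differential inequality y' ≥ 2M + ((p-1)/(p+1)) y^{(p+1)/2} with nonnegative initial value blows up before time T. -/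
/-!
Since `y' ≥ 2M`, the solution has reached `Mδ/2` by time `δ/4`. From then on `y > 0`, and with
`q = (p+1)/2` the function `z = y^{1-q}` satisfies `z' = (1-q) y^{-q} y' < -(q-1)c`, where
`c = (p-1)/(p+1)`. As `z > 0`, the solution survives for less than `z(δ/4)/((q-1)c)` after `δ/4`,
and `T - δ/4` is exactly `(Mδ/2)^{1-q}/((q-1)c)`.
-/

open Set Real

theorem mul_sub_le_sub_of_le_hasDerivAt {f f' : ℝ → ℝ} {a b C : ℝ} (hab : a ≤ b)
    (hf : ContinuousOn f (Icc a b)) (hf' : ∀ x ∈ Ioo a b, HasDerivAt f (f' x) x)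
    (hC : ∀ x ∈ Ioo a b, C ≤ f' x) : C * (b - a) ≤ f b - f a := by
  rcases hab.eq_or_lt with rfl | hab
  · simp
  obtain ⟨c, hc, hslope⟩ := exists_hasDerivAt_eq_slope f f' hab hf hf'
  rw [← le_div_iff₀ (sub_pos.2 hab), ← hslope]
  exact hC c hc

theorem sub_lt_mul_sub_of_hasDerivAt_lt {f f' : ℝ → ℝ} {a b C : ℝ} (hab : a < b)
    (hf : ContinuousOn f (Icc a b)) (hf' : ∀ x ∈ Ioo a b, HasDerivAt f (f' x) x)
    (hC : ∀ x ∈ Ioo a b, f' x < C) : f b - f a < C * (b - a) := by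
  obtain ⟨c, hc, hslope⟩ := exists_hasDerivAt_eq_slope f f' hab hf hf'
  rw [← div_lt_iff₀ (sub_pos.2 hab), ← hslope]
  exact hC c hc

theorem mul_sub_lt_rpow_of_mul_rpow_lt_deriv {y y' : ℝ → ℝ} {a b q B y₀ : ℝ}
    (hab : a ≤ b) (hq : 1 < q) (hB : 0 < B) (hy₀ : 0 < y₀) (hya : y₀ ≤ y a)
    (hy : ContinuousOn y (Icc a b)) (hy' : ∀ t ∈ Ioo a b, HasDerivAt y (y' t) t)
    (hgrowth : ∀ t ∈ Ioo a b, B * max (y t) 0 ^ q < y' t) :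
    (q - 1) * B * (b - a) < y₀ ^ (1 - q) := by
  have hy'_pos : ∀ t ∈ Ioo a b, 0 < y' t := fun t ht =>
    lt_of_le_of_lt (by positivity) (hgrowth t ht)
  have hy_ge : ∀ t ∈ Icc a b, y₀ ≤ y t := fun t ht => by
    have := mul_sub_le_sub_of_le_hasDerivAt ht.1 (hy.mono (Icc_subset_Icc_right ht.2))
      (fun s hs => hy' s (Ioo_subset_Ioo_right ht.2 hs))
      (fun s hs => (hy'_pos s (Ioo_subset_Ioo_right ht.2 hs)).le)
    linarith
  have hy_pos : ∀ t ∈ Icc a b, 0 < y t := fun t ht => hy₀.trans_le (hy_ge t ht)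
  rcases hab.eq_or_lt with rfl | hab
  · simpa using rpow_pos_of_pos hy₀ (1 - q)
  have hz : ContinuousOn (fun t => y t ^ (1 - q)) (Icc a b) :=
    hy.rpow_const fun t ht => Or.inl (hy_pos t ht).ne'
  have hz' : ∀ t ∈ Ioo a b,
      HasDerivAt (fun t => y t ^ (1 - q)) ((1 - q) * y t ^ (-q) * y' t) t := fun t ht => by
    have := (hasDerivAt_rpow_const (p := 1 - q) (Or.inl (hy_pos t (Ioo_subset_Icc_self ht)).ne')
      ).comp t (hy' t ht)
    rwa [show 1 - q - 1 = -q by ring] at this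
  have hz'_lt : ∀ t ∈ Ioo a b, (1 - q) * y t ^ (-q) * y' t < -((q - 1) * B) := fun t ht => by
    have hyt := hy_pos t (Ioo_subset_Icc_self ht)
    have hcoef : (1 - q) * y t ^ (-q) < 0 :=
      mul_neg_of_neg_of_pos (by linarith) (rpow_pos_of_pos hyt _)
    have hgrowth' := hgrowth t ht
    rw [max_eq_left hyt.le] at hgrowth'
    calc (1 - q) * y t ^ (-q) * y' t < (1 - q) * y t ^ (-q) * (B * y t ^ q) :=
          mul_lt_mul_of_neg_left hgrowth' hcoef
      _ = (1 - q) * B * (y t ^ (-q) * y t ^ q) := by ring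
      _ = -((q - 1) * B) := by rw [← rpow_add hyt, neg_add_cancel, rpow_zero]; ring
  have hmvt := sub_lt_mul_sub_of_hasDerivAt_lt hab hz hz' hz'_lt
  have hzb : 0 < y b ^ (1 - q) := rpow_pos_of_pos (hy_pos b ⟨hab.le, le_rfl⟩) _
  have hza : y a ^ (1 - q) ≤ y₀ ^ (1 - q) := rpow_le_rpow_of_nonpos hy₀ hya (by linarith)
  linarith

theorem blowup_time_mul_eq_rpow {p x : ℝ} (hp : 1 < p) (hx : 0 < x) :
    ((p + 1) / 2 - 1) * ((p - 1) / (p + 1)) *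
        ((2:ℝ) ^ ((p + 1) / 2) * (p + 1) / ((p - 1) ^ 2 * x ^ ((p - 1) / 2))) =
      (x / 2) ^ (1 - (p + 1) / 2) := by
  have h2 : (2:ℝ) ^ ((p + 1) / 2) = 2 ^ ((p - 1) / 2) * 2 := by
    rw [show (p + 1) / 2 = (p - 1) / 2 + 1 by ring, rpow_add_one two_ne_zero]
  have hp1 : p - 1 ≠ 0 := by linarith
  have hp2 : p + 1 ≠ 0 := by linarith
  have hx' : x ^ ((p - 1) / 2) ≠ 0 := (rpow_pos_of_pos hx _).ne'
  rw [show 1 - (p + 1) / 2 = -((p - 1) / 2) by ring, rpow_neg (by positivity),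
    div_rpow hx.le zero_le_two, inv_div, h2]
  field_simp
  ring

/-- Every solution of the differential inequality
`y' ≥ 2M + ((p-1)/(p+1)) y^{(p+1)/2}` with nonnegative initial value blows up before time
`T = δ/4 + 2^{(p+1)/2}(p+1)/((p-1)²(Mδ)^{(p-1)/2})`: no such solution can be defined on all
of `[0,T]`. -/
theorem stmt5 (p M δ T : ℝ) (hp : 1 < p) (hM : 0 < M) (hδ : 0 < δ)
    (hT : T = δ / 4 +
      (2:ℝ) ^ ((p + 1) / 2) * (p + 1) / ((p - 1) ^ 2 * (M * δ) ^ ((p - 1) / 2))) :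
    ¬ ∃ y y' : ℝ → ℝ,
      (∀ t ∈ Icc (0:ℝ) T, HasDerivWithinAt y (y' t) (Icc (0:ℝ) T) t) ∧
      0 ≤ y 0 ∧
      ∀ t ∈ Icc (0:ℝ) T,
        2 * M + ((p - 1) / (p + 1)) * (max (y t) 0) ^ ((p + 1) / 2) ≤ y' t := by
  rintro ⟨y, y', hderiv, hy0, hineq⟩
  have hc : 0 < (p - 1) / (p + 1) := div_pos (by linarith) (by linarith)
  have hδT : δ / 4 ≤ T := by
    rw [hT, le_add_iff_nonneg_right]
    have := rpow_pos_of_pos (mul_pos hM hδ) ((p - 1) / 2)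
    have := sub_pos.2 hp
    positivity
  have hy : ContinuousOn y (Icc 0 T) := fun t ht => (hderiv t ht).continuousWithinAt
  have hy' : ∀ t ∈ Ioo 0 T, HasDerivAt y (y' t) t := fun t ht =>
    (hderiv t (Ioo_subset_Icc_self ht)).hasDerivAt (Icc_mem_nhds ht.1 ht.2)
  have hy'_ge : ∀ t ∈ Ioo 0 T, 2 * M ≤ y' t := fun t ht =>
    le_of_add_le_of_nonneg_left (hineq t (Ioo_subset_Icc_self ht)) (by positivity)
  have hy'_gt : ∀ t ∈ Ioo 0 T, (p - 1) / (p + 1) * max (y t) 0 ^ ((p + 1) / 2) < y' t :=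
    fun t ht => (lt_add_of_pos_left _ (by positivity)).trans_le (hineq t (Ioo_subset_Icc_self ht))
  have hstart : M * δ / 2 ≤ y (δ / 4) := by
    have := mul_sub_le_sub_of_le_hasDerivAt (by positivity) (hy.mono (Icc_subset_Icc_right hδT))
      (fun t ht => hy' t (Ioo_subset_Ioo_right hδT ht))
      (fun t ht => hy'_ge t (Ioo_subset_Ioo_right hδT ht))
    linarith
  have hδ0 : 0 ≤ δ / 4 := by positivity
  have hblowup := mul_sub_lt_rpow_of_mul_rpow_lt_deriv hδT (by linarith : 1 < (p + 1) / 2) hc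
    (by positivity) hstart (hy.mono (Icc_subset_Icc_left hδ0))
    (fun t ht => hy' t (Ioo_subset_Ioo_left hδ0 ht))
    (fun t ht => hy'_gt t (Ioo_subset_Ioo_left hδ0 ht))
  rw [hT, add_sub_cancel_left, blowup_time_mul_eq_rpow hp (mul_pos hM hδ)] at hblowup
  exact lt_irrefl _ hblowup
end

section
/- Let p > 1 and a > 0. Suppose ψ : [0,∞) → [0,∞) is differentiable on all of [0,∞) and satisfies ψ'(t) ≥ −4a + 2((p-1)/(p+1)) ψ(t)^{(p+1)/2} for every t ≥ 0. Then ψ(0) ≤ ( 2a(p+1)/(p-1) )^{2/(p+1)}. -/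
open Set

/-!
Put `q = (p+1)/2`, `c = 2(p-1)/(p+1)` and `M = (2a(p+1)/(p-1))^(1/q)`, so that `c M^q = 4a` and the
hypothesis reads `ψ' ≥ c (ψ^q - M^q)`. If `ψ 0 > M`, then `ψ' > 0` wherever `ψ` returns to the level
`ψ 0`, so `ψ` never drops below `ψ 0`. Then `ψ' ≥ ε ψ^q` with `ε = c (1 - M^q / (ψ 0)^q) > 0`, and
`ψ^(1-q)` decreases at least at the constant rate `ε (q-1)`, so it would become negative in finite time.
-/

theorem le_apply_of_hasDerivWithinAt_pos_on_level {f f' : ℝ → ℝ} {a : ℝ}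
    (hf : ∀ t ∈ Ici a, HasDerivWithinAt f (f' t) (Ici a) t)
    (hpos : ∀ t ∈ Ici a, f t = f a → 0 < f' t) :
    ∀ t ∈ Ici a, f a ≤ f t := by
  intro t ht
  have hf_right : ∀ x ∈ Ico a t, HasDerivWithinAt f (f' x) (Ici x) x := fun x hx =>
    (hf x hx.1).mono (Ici_subset_Ici.2 hx.1)
  have hcont : ContinuousOn f (Icc a t) := fun x hx =>
    (hf x hx.1).continuousWithinAt.mono Icc_subset_Ici_self
  have := image_le_of_deriv_right_lt_deriv_boundary (f := fun x => -f x) (B := fun _ => -f a)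
    hcont.neg (fun x hx => (hf_right x hx).neg) le_rfl (fun _ => hasDerivAt_const _ _)
    (fun x hx hx_eq => neg_lt_zero.2 (hpos x hx.1 (neg_inj.1 hx_eq))) ⟨ht, le_rfl⟩
  exact neg_le_neg_iff.1 this

theorem rpow_one_sub_le_of_hasDerivWithinAt_ge_mul_rpow {ψ ψ' : ℝ → ℝ} {a ε q : ℝ} (hq : 1 ≤ q)
    (hpos : ∀ t ∈ Ici a, 0 < ψ t) (hderiv : ∀ t ∈ Ici a, HasDerivWithinAt ψ (ψ' t) (Ici a) t)
    (hineq : ∀ t ∈ Ici a, ε * ψ t ^ q ≤ ψ' t) :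
    ∀ t ∈ Ici a, ψ t ^ (1 - q) ≤ ψ a ^ (1 - q) - ε * (q - 1) * (t - a) := by
  have hderiv_pow : ∀ t ∈ Ici a, HasDerivWithinAt (fun s => ψ s ^ (1 - q))
      (ψ' t * (1 - q) * ψ t ^ (1 - q - 1)) (Ici a) t := fun t ht =>
    (hderiv t ht).rpow_const (Or.inl (hpos t ht).ne')
  intro t ht
  refine image_le_of_deriv_right_le_deriv_boundary (a := a) (b := t)
    (fun x hx => (hderiv_pow x hx.1).continuousWithinAt.mono Icc_subset_Ici_self)
    (fun x hx => (hderiv_pow x hx.1).mono (Ici_subset_Ici.2 hx.1)) (by simp)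
    (by fun_prop) (fun x _ => (((hasDerivAt_id x).sub_const a).const_mul _).const_sub _
      |>.hasDerivWithinAt) (fun x hx => ?_) ⟨ht, le_rfl⟩
  have hψ := hpos x hx.1
  have hε : ε ≤ ψ' x / ψ x ^ q := (le_div_iff₀ (Real.rpow_pos_of_pos hψ q)).2 (hineq x hx.1)
  have hq' : 0 ≤ q - 1 := sub_nonneg.2 hq
  rw [show 1 - q - 1 = -q by ring, Real.rpow_neg hψ.le]
  calc ψ' x * (1 - q) * (ψ x ^ q)⁻¹ = -((q - 1) * (ψ' x / ψ x ^ q)) := by ring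
    _ ≤ -((q - 1) * ε) := by gcongr
    _ = -(ε * (q - 1) * 1) := by ring

theorem false_of_hasDerivWithinAt_ge_mul_rpow {ψ ψ' : ℝ → ℝ} {a ε q : ℝ} (hq : 1 < q)
    (hε : 0 < ε) (hpos : ∀ t ∈ Ici a, 0 < ψ t)
    (hderiv : ∀ t ∈ Ici a, HasDerivWithinAt ψ (ψ' t) (Ici a) t)
    (hineq : ∀ t ∈ Ici a, ε * ψ t ^ q ≤ ψ' t) : False := by
  have hrate : 0 < ε * (q - 1) := mul_pos hε (sub_pos.2 hq)
  set T := a + ψ a ^ (1 - q) / (ε * (q - 1))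
  have hT : a ≤ T :=
    le_add_of_nonneg_right (div_nonneg (Real.rpow_nonneg (hpos a self_mem_Ici).le _) hrate.le)
  have hbound := rpow_one_sub_le_of_hasDerivWithinAt_ge_mul_rpow hq.le hpos hderiv hineq T hT
  have hT_pos := Real.rpow_pos_of_pos (hpos T hT) (1 - q)
  rw [show T - a = ψ a ^ (1 - q) / (ε * (q - 1)) by ring, mul_div_cancel₀ _ hrate.ne',
    sub_self] at hbound
  exact hT_pos.not_ge hbound

theorem le_of_hasDerivWithinAt_ge_mul_rpow_sub {ψ ψ' : ℝ → ℝ} {a c q M : ℝ} (hq : 1 < q)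
    (hc : 0 < c) (hM : 0 ≤ M) (hderiv : ∀ t ∈ Ici a, HasDerivWithinAt ψ (ψ' t) (Ici a) t)
    (hineq : ∀ t ∈ Ici a, c * (ψ t ^ q - M ^ q) ≤ ψ' t) : ψ a ≤ M := by
  by_contra! hMψ
  have hψa_pos : 0 < ψ a := hM.trans_lt hMψ
  have hMq : M ^ q < ψ a ^ q := Real.rpow_lt_rpow hM hMψ (by linarith)
  have hψa : 0 < ψ a ^ q := Real.rpow_pos_of_pos hψa_pos q
  have hincr : ∀ t ∈ Ici a, ψ a ≤ ψ t :=
    le_apply_of_hasDerivWithinAt_pos_on_level hderiv fun t ht hψt =>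
      (mul_pos hc (sub_pos.2 (hψt ▸ hMq))).trans_le (hineq t ht)
  refine false_of_hasDerivWithinAt_ge_mul_rpow (ε := c * (1 - M ^ q / ψ a ^ q)) hq
    (mul_pos hc (sub_pos.2 ((div_lt_one hψa).2 hMq)))
    (fun t ht => hψa_pos.trans_le (hincr t ht)) hderiv fun t ht => ?_
  have hgrowth : ψ a ^ q ≤ ψ t ^ q := Real.rpow_le_rpow hψa_pos.le (hincr t ht) (by linarith)
  calc c * (1 - M ^ q / ψ a ^ q) * ψ t ^ q = c * (ψ t ^ q - M ^ q * (ψ t ^ q / ψ a ^ q)) := by ring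
    _ ≤ c * (ψ t ^ q - M ^ q) := by
      gcongr
      exact le_mul_of_one_le_right (Real.rpow_nonneg hM q) ((one_le_div hψa).2 hgrowth)
    _ ≤ ψ' t := hineq t ht

theorem stmt7_general (p a : ℝ) (hp : 1 < p) (ha : 0 < a) (ψ ψ' : ℝ → ℝ)
    (hderiv : ∀ t ∈ Ici (0:ℝ), HasDerivWithinAt ψ (ψ' t) (Ici (0:ℝ)) t)
    (hineq : ∀ t ∈ Ici (0:ℝ),
      -4 * a + 2 * ((p - 1) / (p + 1)) * (ψ t) ^ ((p + 1) / 2) ≤ ψ' t) :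
    ψ 0 ≤ (2 * a * (p + 1) / (p - 1)) ^ (2 / (p + 1)) := by
  have hB : 0 ≤ 2 * a * (p + 1) / (p - 1) := div_nonneg (by nlinarith) (by linarith)
  have hq : 1 < (p + 1) / 2 := by linarith
  refine le_of_hasDerivWithinAt_ge_mul_rpow_sub hq (c := 2 * ((p - 1) / (p + 1)))
    (by apply mul_pos two_pos; apply div_pos <;> linarith) (Real.rpow_nonneg hB _) hderiv
    fun t ht => ?_
  rw [← inv_div (p + 1) 2, Real.rpow_inv_rpow hB (by linarith)]
  convert hineq t ht using 1
  field_simp [show p - 1 ≠ 0 by linarith]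
  ring

/-- If `ψ : [0,∞) → [0,∞)` is (globally) differentiable and satisfies
`ψ' ≥ −4a + 2((p-1)/(p+1)) ψ^{(p+1)/2}` on `[0,∞)`, then
`ψ(0) ≤ (2a(p+1)/(p-1))^{2/(p+1)}`. -/
theorem stmt7 (p a : ℝ) (hp : 1 < p) (ha : 0 < a) (ψ ψ' : ℝ → ℝ)
    (hnonneg : ∀ t ∈ Ici (0:ℝ), 0 ≤ ψ t)
    (hderiv : ∀ t ∈ Ici (0:ℝ), HasDerivWithinAt ψ (ψ' t) (Ici (0:ℝ)) t)
    (hineq : ∀ t ∈ Ici (0:ℝ),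
      -4 * a + 2 * ((p - 1) / (p + 1)) * (ψ t) ^ ((p + 1) / 2) ≤ ψ' t) :
    ψ 0 ≤ (2 * a * (p + 1) / (p - 1)) ^ (2 / (p + 1)) :=
  stmt7_general p a hp ha ψ ψ' hderiv hineq
end

section
/- Let 1 < p < 5 and a, B > 0. Then there exists K > 0, depending only on p, a and B, such that the following holds: for every function v : [0,1] → ℝ with v(0) = v(1) = 0 admitting g ∈ L²(0,1) with v(x) = ∫₀ˣ g(s) ds for all x ∈ [0,1], if 0 ≤ (1/2)∫₀¹ g(s)² ds − (1/(p+1))∫₀¹ |v(s)|^{p+1} ds ≤ a and ∫₀¹ v(s)² ds ≤ B, then sup_{x ∈ [0,1]} |v(x)| ≤ K. -/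
open Set MeasureTheory

/-!
Write `E = ∫₀¹ g²`. Cauchy–Schwarz gives the Hölder estimate `(v t - v u)² ≤ E |t - u|`, and every
interval of length `δ` contains a point where `v² ≤ B / δ`; with `δ = (1 + E)^{-1/2}` this yields
the Gagliardo–Nirenberg type bound `|v| ≤ (√B + 1) Q` with `Q = (1 + E)^{1/4}`. Then
`∫ |v|^{p+1} ≤ sup |v|^{p-1} ∫ v²`, so `S(v) ≤ a` becomes `Q⁴ ≤ A + D Q^{p-1}` with `A`, `D`
depending only on `p`, `a`, `B`, which bounds `Q` exactly because `p - 1 < 4`.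
-/

lemma sq_intervalIntegral_le_mul {g : ℝ → ℝ} {u t : ℝ} (hut : u ≤ t)
    (hg : IntervalIntegrable g volume u t)
    (hg2 : IntervalIntegrable (fun s => g s ^ 2) volume u t) :
    (∫ s in u..t, g s) ^ 2 ≤ (t - u) * ∫ s in u..t, g s ^ 2 := by
  set I := ∫ s in u..t, g s
  set F := ∫ s in u..t, g s ^ 2
  rcases hut.eq_or_lt with rfl | hlt
  · simp [I]
  -- the discriminant argument: `∫ ((t - u) g - I)² ≥ 0`
  have hexpand : ∫ s in u..t, ((t - u) * g s - I) ^ 2 = (t - u) * ((t - u) * F - I ^ 2) := by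
    have hfun : (fun s => ((t - u) * g s - I) ^ 2)
        = fun s => (t - u) ^ 2 * g s ^ 2 - 2 * (t - u) * I * g s + I ^ 2 := by
      funext s; ring
    rw [hfun, intervalIntegral.integral_add ((hg2.const_mul _).sub (hg.const_mul _))
        intervalIntegrable_const, intervalIntegral.integral_sub (hg2.const_mul _) (hg.const_mul _),
      intervalIntegral.integral_const_mul, intervalIntegral.integral_const_mul,
      intervalIntegral.integral_const, smul_eq_mul]
    ring
  have hnonneg : 0 ≤ ∫ s in u..t, ((t - u) * g s - I) ^ 2 :=
    intervalIntegral.integral_nonneg hut fun _ _ => sq_nonneg _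
  rw [hexpand] at hnonneg
  nlinarith [(mul_nonneg_iff_of_pos_left (sub_pos.2 hlt)).1 hnonneg]

lemma sq_sub_le_of_eq_primitive {g v : ℝ → ℝ} {a b : ℝ}
    (hg : MemLp g 2 (volume.restrict (Ioc a b))) (hv : ∀ x ∈ Icc a b, v x = ∫ s in a..x, g s)
    {u t : ℝ} (hu : u ∈ Icc a b) (ht : t ∈ Icc a b) :
    (v t - v u) ^ 2 ≤ (∫ s in a..b, g s ^ 2) * |t - u| := by
  wlog hut : u ≤ t generalizing u t
  · rw [← neg_sub, neg_sq, abs_sub_comm]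
    exact this ht hu (le_of_not_ge hut)
  have hab : a ≤ b := hu.1.trans hu.2
  have hgi : IntervalIntegrable g volume a b :=
    (intervalIntegrable_iff_integrableOn_Ioc_of_le hab).2 (hg.integrable one_le_two)
  have hg2i : IntervalIntegrable (fun s => g s ^ 2) volume a b :=
    (intervalIntegrable_iff_integrableOn_Ioc_of_le hab).2 hg.integrable_sq
  have hsub : ∀ {x y}, x ∈ Icc a b → y ∈ Icc a b → uIcc x y ⊆ uIcc a b := fun hx hy =>
    uIcc_subset_uIcc (by rwa [uIcc_of_le hab]) (by rwa [uIcc_of_le hab])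
  have hdiff : v t - v u = ∫ s in u..t, g s := by
    rw [hv t ht, hv u hu, intervalIntegral.integral_interval_sub_left
      (hgi.mono_set (hsub ⟨le_rfl, hab⟩ ht)) (hgi.mono_set (hsub ⟨le_rfl, hab⟩ hu))]
  have hsubE : ∫ s in u..t, g s ^ 2 ≤ ∫ s in a..b, g s ^ 2 :=
    intervalIntegral.integral_mono_interval hu.1 hut ht.2
      (Filter.Eventually.of_forall fun _ => sq_nonneg _) hg2i
  rw [hdiff, abs_of_nonneg (sub_nonneg.2 hut), mul_comm]
  calc (∫ s in u..t, g s) ^ 2 ≤ (t - u) * ∫ s in u..t, g s ^ 2 :=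
        sq_intervalIntegral_le_mul hut (hgi.mono_set (hsub hu ht)) (hg2i.mono_set (hsub hu ht))
    _ ≤ (t - u) * ∫ s in a..b, g s ^ 2 := mul_le_mul_of_nonneg_left hsubE (sub_nonneg.2 hut)

lemma continuousOn_of_eq_primitive {g v : ℝ → ℝ} {a b : ℝ} (hab : a ≤ b)
    (hg : IntegrableOn g (Ioc a b)) (hv : ∀ x ∈ Icc a b, v x = ∫ s in a..x, g s) :
    ContinuousOn v (Icc a b) := by
  have hprim := intervalIntegral.continuousOn_primitive_interval (μ := volume) (f := g) (a := a)
    (b := b) (by rwa [uIcc_of_le hab, integrableOn_Icc_iff_integrableOn_Ioc])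
  rw [uIcc_of_le hab] at hprim
  exact hprim.congr hv

lemma abs_le_sqrt_div_add_sqrt_mul {w : ℝ → ℝ} {a b B E δ : ℝ}
    (hw : IntegrableOn (fun s => w s ^ 2) (Icc a b)) (hB : ∫ s in a..b, w s ^ 2 ≤ B)
    (hE : ∀ u ∈ Icc a b, ∀ t ∈ Icc a b, (w t - w u) ^ 2 ≤ E * |t - u|) (hE0 : 0 ≤ E)
    (hδ : 0 < δ) (hδab : δ ≤ b - a) {z : ℝ} (hz : z ∈ Icc a b) :
    |w z| ≤ √(B / δ) + √(E * δ) := by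
  set c := min z (b - δ)
  have hac : a ≤ c := le_min hz.1 (by linarith)
  have hcb : c + δ ≤ b := by linarith [min_le_right z (b - δ)]
  have hzc : z ∈ Icc c (c + δ) := by
    refine ⟨min_le_left _ _, ?_⟩
    rw [← min_add_add_right]
    exact le_min (by linarith) (by linarith [hz.2])
  have hIoc : uIoc c (c + δ) = Ioc c (c + δ) := uIoc_of_le (by linarith)
  have hvol : volume (uIoc c (c + δ)) = ENNReal.ofReal δ := by
    rw [hIoc, Real.volume_Ioc, add_sub_cancel_left]
  obtain ⟨y, hy, hwy⟩ := exists_le_setAverage (μ := volume) (f := fun s => w s ^ 2)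
    (by rw [hvol]; exact ENNReal.ofReal_ne_zero_iff.2 hδ)
    (by rw [hvol]; exact ENNReal.ofReal_ne_top)
    (hw.mono_set (hIoc ▸ Ioc_subset_Icc_self.trans (Icc_subset_Icc hac hcb)))
  rw [hIoc] at hy
  have hyab : y ∈ Icc a b := ⟨by linarith [hy.1], by linarith [hy.2]⟩
  have hwy' : w y ^ 2 ≤ B / δ := by
    calc w y ^ 2 ≤ ⨍ s in c..c + δ, w s ^ 2 := hwy
      _ = δ⁻¹ * ∫ s in c..c + δ, w s ^ 2 := by
          rw [interval_average_eq, add_sub_cancel_left, smul_eq_mul]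
      _ ≤ δ⁻¹ * B := by
          gcongr
          refine le_trans ?_ hB
          exact intervalIntegral.integral_mono_interval hac (by linarith) hcb
            (Filter.Eventually.of_forall fun _ => sq_nonneg _)
            ((intervalIntegrable_iff_integrableOn_Icc_of_le (by linarith)).2 hw)
      _ = B / δ := inv_mul_eq_div _ _
  have hzy : (w z - w y) ^ 2 ≤ E * δ := by
    refine (hE y hyab z hz).trans (mul_le_mul_of_nonneg_left ?_ hE0)
    rw [abs_le]; constructor <;> linarith [hy.1, hy.2, hzc.1, hzc.2]
  calc |w z| = |w y + (w z - w y)| := by rw [add_sub_cancel]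
    _ ≤ |w y| + |w z - w y| := abs_add_le _ _
    _ ≤ √(B / δ) + √(E * δ) := add_le_add (Real.abs_le_sqrt hwy') (Real.abs_le_sqrt hzy)

lemma abs_le_of_eq_primitive_of_integral_sq_le {g v : ℝ → ℝ} {B : ℝ}
    (hg : MemLp g 2 (volume.restrict (Ioc 0 1))) (hv : ∀ x ∈ Icc 0 1, v x = ∫ s in (0:ℝ)..x, g s)
    (hB : ∫ s in (0:ℝ)..1, v s ^ 2 ≤ B) {x : ℝ} (hx : x ∈ Icc (0:ℝ) 1) :
    |v x| ≤ (√B + 1) * (1 + ∫ s in (0:ℝ)..1, g s ^ 2) ^ (4⁻¹ : ℝ) := by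
  set E := ∫ s in (0:ℝ)..1, g s ^ 2
  have hE0 : 0 ≤ E := intervalIntegral.integral_nonneg zero_le_one fun _ _ => sq_nonneg _
  set Q := (1 + E) ^ (4⁻¹ : ℝ)
  have hQ4 : Q ^ 4 = 1 + E := by
    rw [← Real.rpow_natCast]; exact Real.rpow_inv_rpow (by positivity) (by norm_num)
  have hQ1 : 1 ≤ Q := Real.one_le_rpow (by linarith) (by norm_num)
  have hQ0 : 0 < Q := by linarith
  -- the scale `δ = Q⁻²` balances the two terms of the interpolation bound
  have hv2 := ((continuousOn_of_eq_primitive zero_le_one (hg.integrable one_le_two) hv).pow 2)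
  have hbound := abs_le_sqrt_div_add_sqrt_mul (δ := (Q ^ 2)⁻¹) hv2.integrableOn_Icc hB
    (fun u hu t ht => sq_sub_le_of_eq_primitive hg hv hu ht) hE0 (by positivity)
    (by rw [sub_zero]; exact inv_le_one_of_one_le₀ (one_le_pow₀ hQ1)) hx
  have hEQ : √(E * (Q ^ 2)⁻¹) ≤ Q := by
    refine Real.sqrt_le_iff.2 ⟨hQ0.le, ?_⟩
    rw [← div_eq_mul_inv, div_le_iff₀ (by positivity)]
    nlinarith
  calc |v x| ≤ √(B / (Q ^ 2)⁻¹) + √(E * (Q ^ 2)⁻¹) := hbound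
    _ ≤ √B * Q + Q := by
        rw [div_inv_eq_mul, Real.sqrt_mul' _ (sq_nonneg Q), Real.sqrt_sq hQ0.le]
        exact add_le_add_right hEQ _
    _ = (√B + 1) * Q := by ring

lemma abs_rpow_add_two_le {x M r : ℝ} (hr : 0 ≤ r) (hx : |x| ≤ M) :
    |x| ^ (r + 2) ≤ M ^ r * x ^ 2 := by
  rw [Real.rpow_add' (abs_nonneg x) (by linarith), Real.rpow_two, sq_abs]
  exact mul_le_mul_of_nonneg_right (Real.rpow_le_rpow (abs_nonneg x) hx hr) (sq_nonneg x)

lemma intervalIntegral_abs_rpow_add_two_le {w : ℝ → ℝ} {a b M r : ℝ} (hab : a ≤ b) (hr : 0 ≤ r)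
    (hw : IntervalIntegrable (fun s => w s ^ 2) volume a b) (hM : ∀ x ∈ Icc a b, |w x| ≤ M) :
    ∫ s in a..b, |w s| ^ (r + 2) ≤ M ^ r * ∫ s in a..b, w s ^ 2 := by
  rw [← intervalIntegral.integral_const_mul, intervalIntegral.integral_of_le hab,
    intervalIntegral.integral_of_le hab]
  refine integral_mono_of_nonneg (Filter.Eventually.of_forall fun _ => by positivity)
    (hw.1.const_mul _) ((ae_restrict_iff' measurableSet_Ioc).2 ?_)
  exact Filter.Eventually.of_forall fun x hx =>
    abs_rpow_add_two_le hr (hM x (Ioc_subset_Icc_self hx))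

lemma exists_bound_of_rpow_le_add_mul_rpow {r s A D : ℝ} (hs : 0 < s) (hrs : r < s)
    (hA : 0 ≤ A) (hD : 0 ≤ D) :
    ∃ K > 0, ∀ Q : ℝ, 0 ≤ Q → Q ^ s ≤ A + D * Q ^ r → Q ≤ K := by
  refine ⟨max 1 (max ((2 * A) ^ s⁻¹) ((2 * D) ^ (s - r)⁻¹)), by positivity, fun Q hQ hQs => ?_⟩
  by_contra! hK
  have hQ0 : 0 < Q := lt_of_le_of_lt (by positivity) hK
  have hA' : 2 * A < Q ^ s := (Real.rpow_inv_lt_iff_of_pos (by positivity) hQ hs).1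
    ((le_max_left _ _).trans_lt ((le_max_right _ _).trans_lt hK))
  have hD' : 2 * D < Q ^ (s - r) := (Real.rpow_inv_lt_iff_of_pos (by positivity) hQ (by linarith)).1
    ((le_max_right _ _).trans_lt ((le_max_right _ _).trans_lt hK))
  have hsplit : Q ^ s = Q ^ (s - r) * Q ^ r := by rw [← Real.rpow_add hQ0, sub_add_cancel]
  nlinarith [mul_lt_mul_of_pos_right hD' (Real.rpow_pos_of_pos hQ0 r)]

/-- For `1 < p < 5`: a uniform sup-norm bound, depending only on `p`, `a`, `B`, for all
Dirichlet functions `v(x) = ∫₀ˣ g` with `g ∈ L²(0,1)`, whose potential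
`S(v) = (1/2)∫₀¹ g² − (1/(p+1))∫₀¹ |v|^{p+1}` lies in `[0,a]` and whose `L²`-norm squared
is at most `B`. -/
theorem stmt8 (p a B : ℝ) (hp1 : 1 < p) (hp5 : p < 5) (ha : 0 < a) (hB : 0 < B) :
    ∃ K > (0:ℝ), ∀ v g : ℝ → ℝ,
      v 0 = 0 → v 1 = 0 →
      MemLp g 2 (volume.restrict (Ioc (0:ℝ) 1)) →
      (∀ x ∈ Icc (0:ℝ) 1, v x = ∫ s in (0:ℝ)..x, g s) →
      0 ≤ (1/2) * (∫ s in (0:ℝ)..1, g s ^ 2)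
          - (1/(p+1)) * ∫ s in (0:ℝ)..1, |v s| ^ (p + 1) →
      (1/2) * (∫ s in (0:ℝ)..1, g s ^ 2)
          - (1/(p+1)) * (∫ s in (0:ℝ)..1, |v s| ^ (p + 1)) ≤ a →
      (∫ s in (0:ℝ)..1, v s ^ 2) ≤ B →
      ∀ x ∈ Icc (0:ℝ) 1, |v x| ≤ K := by
  set C := √B + 1
  set D := 2 * B / (p + 1) * C ^ (p - 1)
  obtain ⟨K, hK, hbound⟩ := exists_bound_of_rpow_le_add_mul_rpow (s := 4) (r := p - 1)
    (A := 1 + 2 * a) (D := D) (by norm_num) (by linarith) (by positivity) (by positivity)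
  refine ⟨C * K, by positivity, fun v g _ _ hg hv _ hSa hvB x hx => ?_⟩
  set E := ∫ s in (0:ℝ)..1, g s ^ 2
  set Q := (1 + E) ^ (4⁻¹ : ℝ)
  have hE0 : 0 ≤ E := intervalIntegral.integral_nonneg zero_le_one fun s _ => sq_nonneg (g s)
  have hQ0 : 0 ≤ Q := by positivity
  have hsup : ∀ y ∈ Icc (0:ℝ) 1, |v y| ≤ C * Q := fun y hy =>
    abs_le_of_eq_primitive_of_integral_sq_le hg hv hvB hy
  have hpower : ∫ s in (0:ℝ)..1, |v s| ^ (p + 1) ≤ (C * Q) ^ (p - 1) * B := by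
    have h := intervalIntegral_abs_rpow_add_two_le (r := p - 1) zero_le_one (by linarith)
      (((continuousOn_of_eq_primitive zero_le_one (hg.integrable one_le_two) hv).pow 2)
        |>.intervalIntegrable_of_Icc zero_le_one) hsup
    rw [show p - 1 + 2 = p + 1 by ring] at h
    exact h.trans (mul_le_mul_of_nonneg_left hvB (by positivity))
  have hQ4 : Q ^ (4 : ℝ) = 1 + E := Real.rpow_inv_rpow (by positivity) (by norm_num)
  have hQ : Q ^ (4 : ℝ) ≤ 1 + 2 * a + D * Q ^ (p - 1) := by
    have hCQ : (C * Q) ^ (p - 1) = C ^ (p - 1) * Q ^ (p - 1) := Real.mul_rpow (by positivity) hQ0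
    have h1 : 1 / (p + 1) * ∫ s in (0:ℝ)..1, |v s| ^ (p + 1)
        ≤ 1 / (p + 1) * ((C * Q) ^ (p - 1) * B) := by
      gcongr
    have h2 : D * Q ^ (p - 1) = 2 * (1 / (p + 1) * ((C * Q) ^ (p - 1) * B)) := by
      rw [hCQ]; simp only [D]; ring
    linarith
  exact (hsup x hx).trans (mul_le_mul_of_nonneg_left (hbound Q hQ0 hQ) (by positivity))
end

section
/- Let d ≥ 2, h > 0, p > 1 and ḡ(x) = (max(x,0))^p − x. Let T > 0 and let U : [0,T] → ℝ^d be differentiable and satisfy the system U₁'(t) = (2/h²)(−U₁(t) + U₂(t)), U_i'(t) = (1/h²)(U_{i+1}(t) − 2U_i(t) + U_{i-1}(t)) for all 2 ≤ i ≤ d−1, and U_d'(t) = (2/h²)(−U_d(t) + U_{d-1}(t) + h ḡ(U_d(t))) for all t ∈ [0,T]. Then for every t ∈ [0,T]: max_{k=1,…,d} |U_k(t)| ≤ max( max_{k=1,…,d} |U_k(0)|, sup_{0 ≤ s ≤ t} U_d(s) ). -/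
open Set Filter Topology

lemma aux_nebot {t₁ : ℝ} (ht : 0 < t₁) : (𝓝[Ico (0:ℝ) t₁] t₁).NeBot := by
  apply mem_closure_iff_nhdsWithin_neBot.mp
  rw [closure_Ico ht.ne]
  exact right_mem_Icc.mpr ht.le

lemma aux_le_of_lt_left {g : ℝ → ℝ} {t₁ c : ℝ} (ht : 0 < t₁)
    (hg : ContinuousWithinAt g (Icc 0 t₁) t₁)
    (hle : ∀ s ∈ Ico (0:ℝ) t₁, g s ≤ c) : g t₁ ≤ c := by
  have := aux_nebot ht
  have htend : Tendsto g (𝓝[Ico (0:ℝ) t₁] t₁) (𝓝 (g t₁)) :=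
    hg.mono Ico_subset_Icc_self
  exact le_of_tendsto htend
    (by filter_upwards [self_mem_nhdsWithin] with s hs using hle s hs)

lemma aux_deriv_nonneg {f : ℝ → ℝ} {f' t₁ : ℝ} (ht : 0 < t₁)
    (hf : HasDerivWithinAt f f' (Icc 0 t₁) t₁)
    (hle : ∀ s ∈ Ico (0:ℝ) t₁, f s ≤ f t₁) : 0 ≤ f' := by
  have hset : Icc (0:ℝ) t₁ \ {t₁} = Ico 0 t₁ := by
    ext x
    simp only [mem_diff, mem_Icc, mem_singleton_iff, mem_Ico]
    constructor
    · rintro ⟨⟨h1, h2⟩, h3⟩; exact ⟨h1, lt_of_le_of_ne h2 h3⟩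
    · rintro ⟨h1, h2⟩; exact ⟨⟨h1, h2.le⟩, h2.ne⟩
  have htend := hasDerivWithinAt_iff_tendsto_slope.mp hf
  rw [hset] at htend
  have := aux_nebot ht
  refine ge_of_tendsto htend ?_
  filter_upwards [self_mem_nhdsWithin] with s hs
  rw [slope_def_field]
  have h1 : f s - f t₁ ≤ 0 := by linarith [hle s hs]
  have h2 : s - t₁ < 0 := by linarith [hs.2]
  have := div_nonneg (neg_nonneg.2 h1) (neg_nonneg.2 h2.le)
  rwa [neg_div_neg_eq] at this

/-- The reaction term `ḡ(x) = (x⁺)^p − x`. -/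
noncomputable def gbar (p x : ℝ) : ℝ := (max x 0) ^ p - x

/-- Maximum principle for the spatially discretized heat equation with nonlinear Neumann
boundary condition (coordinates indexed by `1,…,d`):
`max_k |U_k(t)| ≤ max( max_k |U_k(0)| , sup_{0≤s≤t} U_d(s) )`. -/
theorem stmt10 (d : ℕ) (hd : 2 ≤ d) (h p T : ℝ) (hh : 0 < h) (hp : 1 < p) (hT : 0 < T)
    (U U' : ℝ → ℕ → ℝ)
    (hderiv : ∀ k, 1 ≤ k → k ≤ d → ∀ t ∈ Icc (0:ℝ) T,
      HasDerivWithinAt (fun s => U s k) (U' t k) (Icc (0:ℝ) T) t)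
    (heq1 : ∀ t ∈ Icc (0:ℝ) T, U' t 1 = 2 / h ^ 2 * (-U t 1 + U t 2))
    (heqi : ∀ i, 2 ≤ i → i ≤ d - 1 → ∀ t ∈ Icc (0:ℝ) T,
      U' t i = 1 / h ^ 2 * (U t (i + 1) - 2 * U t i + U t (i - 1)))
    (heqd : ∀ t ∈ Icc (0:ℝ) T,
      U' t d = 2 / h ^ 2 * (-U t d + U t (d - 1) + h * gbar p (U t d))) :
    ∀ t ∈ Icc (0:ℝ) T, ∀ k, 1 ≤ k → k ≤ d →
      |U t k| ≤ max
        ((Finset.Icc 1 d).sup' (Finset.nonempty_Icc.mpr (by omega)) fun j => |U 0 j|)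
        (sSup ((fun s => U s d) '' Icc (0:ℝ) t)) := by
  intro t ht k hk1 hkd
  set M0 := (Finset.Icc 1 d).sup' (Finset.nonempty_Icc.mpr (by omega)) fun j => |U 0 j|
    with hM0def
  set S := sSup ((fun s => U s d) '' Icc (0:ℝ) t) with hSdef
  have hcont : ∀ j, 1 ≤ j → j ≤ d → ContinuousOn (fun s => U s j) (Icc 0 T) :=
    fun j h1 h2 s hs => (hderiv j h1 h2 s hs).continuousWithinAt
  have hIccsub : Icc (0:ℝ) t ⊆ Icc 0 T := Icc_subset_Icc le_rfl ht.2
  have hM0le : ∀ j, 1 ≤ j → j ≤ d → |U 0 j| ≤ M0 := fun j h1 h2 =>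
    Finset.le_sup' (fun j => |U 0 j|) (Finset.mem_Icc.mpr ⟨h1, h2⟩)
  have hB0 : 0 ≤ max M0 S :=
    le_trans (abs_nonneg (U 0 1)) (le_trans (hM0le 1 le_rfl (by omega)) (le_max_left _ _))
  have hbdd : BddAbove ((fun s => U s d) '' Icc (0:ℝ) t) :=
    (isCompact_Icc.image_of_continuousOn ((hcont d (by omega) le_rfl).mono hIccsub)).bddAbove
  have hUS : ∀ s ∈ Icc (0:ℝ) t, U s d ≤ S := fun s hs => le_csSup hbdd (mem_image_of_mem _ hs)
  -- main claim
  have key : ∀ ε > 0, ∀ j, 1 ≤ j → j ≤ d → |U t j| < max M0 S + ε * (1 + t) := by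
    intro ε hε
    by_contra hcon
    push_neg at hcon
    obtain ⟨j0, hj01, hj0d, hj0⟩ := hcon
    set A : Set ℝ :=
      {s | s ∈ Icc (0:ℝ) t ∧ ∃ jj ∈ Finset.Icc 1 d, max M0 S + ε * (1 + s) ≤ |U s jj|}
      with hAdef
    have hAne : A.Nonempty :=
      ⟨t, right_mem_Icc.mpr ht.1, j0, Finset.mem_Icc.mpr ⟨hj01, hj0d⟩, hj0⟩
    have hAclosed : IsClosed A := by
      have hrw : A = ⋃ jj ∈ Finset.Icc 1 d,
          (Icc (0:ℝ) t ∩ (fun s => |U s jj| - (max M0 S + ε * (1 + s))) ⁻¹' Ici 0) := by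
        ext s
        simp only [hAdef, mem_setOf_eq, mem_iUnion, mem_inter_iff, mem_preimage, mem_Ici,
          exists_prop, sub_nonneg]
        constructor
        · rintro ⟨hs, jj, hjj, hjle⟩; exact ⟨jj, hjj, hs, hjle⟩
        · rintro ⟨jj, hjj, hs, hjle⟩; exact ⟨hs, jj, hjj, hjle⟩
      rw [hrw]
      refine isClosed_biUnion_finset fun jj hjj => ?_
      obtain ⟨hj1, hj2⟩ := Finset.mem_Icc.mp hjj
      have hcj : ContinuousOn (fun s => |U s jj| - (max M0 S + ε * (1 + s))) (Icc 0 t) := by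
        apply ContinuousOn.sub
        · exact ((hcont jj hj1 hj2).mono hIccsub).abs
        · exact (continuous_const.add
            (continuous_const.mul (continuous_const.add continuous_id))).continuousOn
      exact hcj.preimage_isClosed_of_isClosed isClosed_Icc isClosed_Ici
    have hAbdd : BddBelow A := ⟨0, fun x hx => hx.1.1⟩
    have ht₁A : sInf A ∈ A := hAclosed.csInf_mem hAne hAbdd
    obtain ⟨ht₁mem, k0, hk0mem, hk0ge⟩ := ht₁A
    obtain ⟨hk01, hk0d⟩ := Finset.mem_Icc.mp hk0mem
    set t₁ := sInf A with ht₁def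
    have ht₁T : t₁ ∈ Icc (0:ℝ) T := hIccsub ht₁mem
    have ht₁pos : 0 < t₁ := by
      rcases eq_or_lt_of_le ht₁mem.1 with h0 | h0
      · exfalso
        rw [← h0] at hk0ge
        have h1 := hM0le k0 hk01 hk0d
        have h2 : M0 ≤ max M0 S := le_max_left _ _
        nlinarith
      · exact h0
    have hltA : ∀ s ∈ Ico (0:ℝ) t₁, ∀ jj, 1 ≤ jj → jj ≤ d →
        |U s jj| < max M0 S + ε * (1 + s) := by
      intro s hs jj h1 h2
      by_contra hge
      push_neg at hge
      have hsA : s ∈ A :=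
        ⟨⟨hs.1, le_trans hs.2.le ht₁mem.2⟩, jj, Finset.mem_Icc.mpr ⟨h1, h2⟩, hge⟩
      exact absurd (csInf_le hAbdd hsA) (not_le.mpr hs.2)
    have hlet₁ : ∀ jj, 1 ≤ jj → jj ≤ d → |U t₁ jj| ≤ max M0 S + ε * (1 + t₁) := by
      intro jj h1 h2
      have hc : ContinuousWithinAt (fun s => |U s jj| - ε * (1 + s)) (Icc 0 t₁) t₁ := by
        apply ContinuousWithinAt.sub
        · exact (((hcont jj h1 h2).mono
            (Icc_subset_Icc le_rfl ht₁T.2)) t₁ (right_mem_Icc.mpr ht₁pos.le)).abs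
        · exact (continuous_const.mul (continuous_const.add continuous_id)).continuousWithinAt
      have h5 := aux_le_of_lt_left (c := max M0 S) ht₁pos hc (fun s hs => by
        have := hltA s hs jj h1 h2
        linarith)
      linarith
    have hEq : |U t₁ k0| = max M0 S + ε * (1 + t₁) :=
      le_antisymm (hlet₁ k0 hk01 hk0d) hk0ge
    obtain ⟨σ, hσ1, hσU⟩ : ∃ σ : ℝ, (σ = 1 ∨ σ = -1) ∧ σ * U t₁ k0 = |U t₁ k0| := by
      rcases abs_choice (U t₁ k0) with h' | h'
      · exact ⟨1, Or.inl rfl, by rw [one_mul, h']⟩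
      · exact ⟨-1, Or.inr rfl, by rw [h']; ring⟩
    have hσabs : ∀ x : ℝ, σ * x ≤ |x| := by
      intro x
      rcases hσ1 with h' | h' <;> rw [h']
      · rw [one_mul]; exact le_abs_self x
      · rw [neg_one_mul]; exact neg_le_abs x
    obtain ⟨c, hcdef⟩ : ∃ c : ℝ, c = max M0 S + ε * (1 + t₁) := ⟨_, rfl⟩
    have hεt₁ : 0 < ε * (1 + t₁) := mul_pos hε (by linarith [ht₁mem.1])
    have hcσ : σ * U t₁ k0 = c := by rw [hσU, hEq, hcdef]
    have hcpos : 0 < c := by rw [hcdef]; linarith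
    have hall : ∀ jj, 1 ≤ jj → jj ≤ d → |U t₁ jj| ≤ c := fun jj h1 h2 => by
      rw [hcdef]; exact hlet₁ jj h1 h2
    have hσle : ∀ jj, 1 ≤ jj → jj ≤ d → σ * U t₁ jj ≤ c := fun jj h1 h2 =>
      le_trans (hσabs _) (hall jj h1 h2)
    -- derivative lower bound at t₁
    have hφ : HasDerivWithinAt (fun s => σ * U s k0 - ε * s) (σ * U' t₁ k0 - ε)
        (Icc 0 t₁) t₁ := by
      have h1 := ((hderiv k0 hk01 hk0d t₁ ht₁T).const_mul σ).mono
        (Icc_subset_Icc le_rfl ht₁T.2)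
      have h2 : HasDerivWithinAt (fun s : ℝ => ε * s) ε (Icc (0:ℝ) t₁) t₁ := by
        simpa using (hasDerivWithinAt_id t₁ (Icc (0:ℝ) t₁)).const_mul ε
      exact h1.sub h2
    have hεle : ε ≤ σ * U' t₁ k0 := by
      have hnn := aux_deriv_nonneg ht₁pos hφ (fun s hs => by
        have h1 := hltA s hs k0 hk01 hk0d
        have h2 := hσabs (U s k0)
        have e1 : ε * (1 + s) = ε + ε * s := by ring
        have e2 : ε * (1 + t₁) = ε + ε * t₁ := by ring
        linarith [hcσ, hcdef])
      linarith
    have hh2 : (0:ℝ) < 2 / h ^ 2 := by positivity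
    have hh1 : (0:ℝ) < 1 / h ^ 2 := by positivity
    -- case analysis on k0
    rcases eq_or_ne k0 1 with hk' | hkne1
    · -- k0 = 1
      subst hk'
      have hd1 : σ * U' t₁ 1 = 2 / h ^ 2 * (σ * U t₁ 2 - c) := by
        rw [heq1 t₁ ht₁T, ← hcσ]; ring
      have hle0 : σ * U' t₁ 1 ≤ 0 := by
        rw [hd1]
        exact mul_nonpos_of_nonneg_of_nonpos hh2.le
          (by linarith [hσle 2 (by omega) (by omega)])
      linarith
    · rcases eq_or_ne k0 d with hk' | hkned
      · -- k0 = d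
        rcases hσ1 with hσe | hσe
        · -- σ = 1
          have hUdc : U t₁ d = c := by rw [← hk', ← hcσ, hσe, one_mul]
          have h1 := hUS t₁ ht₁mem
          have h2 : S ≤ max M0 S := le_max_right _ _
          rw [hcdef] at hUdc
          linarith
        · -- σ = -1
          have hUdc : U t₁ d = -c := by
            rw [← hk']
            have : -U t₁ k0 = c := by rw [← hcσ, hσe]; ring
            linarith
          have hg : gbar p (U t₁ d) = c := by
            rw [hUdc]
            unfold gbar
            rw [max_eq_right (by linarith : -c ≤ 0),
              Real.zero_rpow (lt_trans zero_lt_one hp).ne']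
            ring
          have hεle' : ε ≤ -U' t₁ d := by
            rw [← hk']
            have := hεle
            rw [hσe] at this
            linarith
          have hUd1 : -c ≤ U t₁ (d - 1) :=
            (abs_le.mp (hall (d - 1) (by omega) (by omega))).1
          have hder : -U' t₁ d = -(2 / h ^ 2 * (c + U t₁ (d - 1) + h * c)) := by
            rw [heqd t₁ ht₁T, hg, hUdc]; ring
          have hin : 0 < c + U t₁ (d - 1) + h * c := by nlinarith [mul_pos hh hcpos]
          have := mul_pos hh2 hin
          linarith
      · -- interior
        have h2k : 2 ≤ k0 := by omega
        have hkd1 : k0 ≤ d - 1 := by omega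
        have hd1 : σ * U' t₁ k0 =
            1 / h ^ 2 * (σ * U t₁ (k0 + 1) + σ * U t₁ (k0 - 1) - 2 * c) := by
          rw [heqi k0 h2k hkd1 t₁ ht₁T, ← hcσ]; ring
        have hle0 : σ * U' t₁ k0 ≤ 0 := by
          rw [hd1]
          exact mul_nonpos_of_nonneg_of_nonpos hh1.le
            (by linarith [hσle (k0 + 1) (by omega) (by omega),
              hσle (k0 - 1) (by omega) (by omega)])
        linarith
  -- conclude by letting ε → 0
  have hfin : ∀ ε > 0, |U t k| ≤ max M0 S + ε := by
    intro ε hε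
    have h1t : (0:ℝ) < 1 + t := by linarith [ht.1]
    have hk' := key (ε / (1 + t)) (by positivity) k hk1 hkd
    have heq : ε / (1 + t) * (1 + t) = ε := div_mul_cancel₀ ε h1t.ne'
    linarith
  exact le_of_forall_pos_le_add hfin
end

section
/- Let (Ω, ℱ, P) be a probability space, (E, ℰ) and (E', ℰ') measurable spaces, and X : Ω → E, Y : Ω → E', Ỹ : Ω → E' measurable maps such that X and Ỹ are independent, Y and Ỹ have the same distribution, and the event {ω ∈ Ω : Y(ω) ≠ Ỹ(ω)} is measurable. Then for all bounded measurable functions f : E → ℝ and g : E' → ℝ: | E[f(X) g(Y)] − E[f(X)] E[g(Y)] | ≤ 2 ‖f‖_∞ ‖g‖_∞ P( Y ≠ Ỹ ). -/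
/-!
Let `X` be independent of `Y'`, a copy of `Y` with the same law. Independence and equality of
laws give `E[f(X) g(Y)] - E[f(X)] E[g(Y)] = E[f(X) (g(Y) - g(Y'))]`, and the integrand of the
right-hand side vanishes off `{Y ≠ Y'}` and is bounded by `2 ‖f‖_∞ ‖g‖_∞` on it.
-/

open MeasureTheory ProbabilityTheory

theorem norm_integral_le_of_forall_compl_eq_zero {α G : Type*} [MeasurableSpace α]
    [NormedAddCommGroup G] [NormedSpace ℝ G] {μ : Measure α} [IsFiniteMeasure μ]
    {F : α → G} {s : Set α} {C : ℝ} (hF : ∀ x ∉ s, F x = 0) (hC : ∀ x ∈ s, ‖F x‖ ≤ C) :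
    ‖∫ x, F x ∂μ‖ ≤ C * μ.real s := by
  rw [← setIntegral_eq_integral_of_forall_compl_eq_zero hF]
  exact norm_setIntegral_le_of_norm_le_const (measure_lt_top μ s) hC

theorem integral_mul_sub_mul_integral_eq_integral_mul_sub {Ω : Type*} [MeasurableSpace Ω]
    {P : Measure Ω} {U V V' : Ω → ℝ} (hindep : IndepFun U V' P) (hident : IdentDistrib V V' P P)
    (hU : AEStronglyMeasurable U P) (hUV : Integrable (fun ω => U ω * V ω) P)
    (hUV' : Integrable (fun ω => U ω * V' ω) P) :
    (∫ ω, U ω * V ω ∂P) - (∫ ω, U ω ∂P) * ∫ ω, V ω ∂P = ∫ ω, U ω * (V ω - V' ω) ∂P := by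
  simp only [mul_sub]
  rw [integral_sub hUV hUV', hident.integral_eq,
    hindep.integral_fun_mul_eq_mul_integral hU hident.aemeasurable_snd.aestronglyMeasurable]

theorem stmt15_general {Ω E E' : Type*} [MeasurableSpace Ω] [MeasurableSpace E]
    [MeasurableSpace E'] (P : Measure Ω) [IsProbabilityMeasure P]
    (X : Ω → E) (Y Y' : Ω → E')
    (hX : Measurable X)
    (hindep : IndepFun X Y' P)
    (hident : IdentDistrib Y Y' P P)
    (f : E → ℝ) (g : E' → ℝ) (hf : Measurable f) (hg : Measurable g)
    (hfb : BddAbove (Set.range fun x => |f x|))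
    (hgb : BddAbove (Set.range fun y => |g y|)) :
    |(∫ ω, f (X ω) * g (Y ω) ∂P) - (∫ ω, f (X ω) ∂P) * ∫ ω, g (Y ω) ∂P| ≤
      2 * sSup (Set.range fun x => |f x|) * sSup (Set.range fun y => |g y|) *
        (P {ω | Y ω ≠ Y' ω}).toReal := by
  set Mf := sSup (Set.range fun x => |f x|)
  set Mg := sSup (Set.range fun y => |g y|)
  have hfM (x : E) : |f x| ≤ Mf := le_csSup hfb ⟨x, rfl⟩
  have hgM (y : E') : |g y| ≤ Mg := le_csSup hgb ⟨y, rfl⟩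
  have hMf : 0 ≤ Mf := Real.sSup_nonneg (by rintro _ ⟨x, rfl⟩; exact abs_nonneg _)
  have hfX : AEStronglyMeasurable (fun ω => f (X ω)) P := (hf.comp hX).aestronglyMeasurable
  have hfX_gZ {Z : Ω → E'} (hZ : AEMeasurable Z P) :
      Integrable (fun ω => f (X ω) * g (Z ω)) P :=
    (Integrable.of_bound (hg.comp_aemeasurable hZ).aestronglyMeasurable Mg
      (ae_of_all _ fun ω => hgM _)).bdd_mul hfX (ae_of_all _ fun ω => hfM _)
  rw [integral_mul_sub_mul_integral_eq_integral_mul_sub (U := fun ω => f (X ω))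
    (V := fun ω => g (Y ω)) (V' := fun ω => g (Y' ω)) (hindep.comp hf hg) (hident.comp hg) hfX
    (hfX_gZ hident.aemeasurable_fst) (hfX_gZ hident.aemeasurable_snd)]
  refine (Real.norm_eq_abs _).ge.trans (norm_integral_le_of_forall_compl_eq_zero
    (fun ω hω => by simp [not_not.mp hω]) fun ω _ => ?_)
  calc ‖f (X ω) * (g (Y ω) - g (Y' ω))‖ = |f (X ω)| * |g (Y ω) - g (Y' ω)| := by
        rw [Real.norm_eq_abs, abs_mul]
    _ ≤ Mf * (Mg + Mg) :=
        mul_le_mul (hfM _) ((abs_sub _ _).trans (add_le_add (hgM _) (hgM _))) (abs_nonneg _) hMf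
    _ = 2 * Mf * Mg := by ring

/-- Coupling estimate: if `X` and `Y'` are independent, `Y` and `Y'` are identically
distributed, then for bounded measurable `f`, `g`:
`|E[f(X)g(Y)] − E[f(X)]E[g(Y)]| ≤ 2 ‖f‖_∞ ‖g‖_∞ P(Y ≠ Y')`. -/
theorem stmt15 {Ω E E' : Type*} [MeasurableSpace Ω] [MeasurableSpace E]
    [MeasurableSpace E'] (P : Measure Ω) [IsProbabilityMeasure P]
    (X : Ω → E) (Y Y' : Ω → E')
    (hX : Measurable X) (hY : Measurable Y) (hY' : Measurable Y')
    (hindep : IndepFun X Y' P)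
    (hident : IdentDistrib Y Y' P P)
    (hne : MeasurableSet {ω | Y ω ≠ Y' ω})
    (f : E → ℝ) (g : E' → ℝ) (hf : Measurable f) (hg : Measurable g)
    (hfb : BddAbove (Set.range fun x => |f x|))
    (hgb : BddAbove (Set.range fun y => |g y|)) :
    |(∫ ω, f (X ω) * g (Y ω) ∂P) - (∫ ω, f (X ω) ∂P) * ∫ ω, g (Y ω) ∂P| ≤
      2 * sSup (Set.range fun x => |f x|) * sSup (Set.range fun y => |g y|) *
        (P {ω | Y ω ≠ Y' ω}).toReal :=
  stmt15_general P X Y Y' hX hindep hident f g hf hg hfb hgb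
end
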